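/- arXiv:1811.05593 — 4 statements merged into one kernel-verified Lean document; each statement's English description precedes it below -/
import Mathlib

section
/- Let (H,R) be a quasi-triangular Hopf algebra over a field k. If D is a Yetter-Drinfeld submodule of H (where H is viewed as a left-left Yetter-Drinfeld module over itself via the left adjoint action ·_ad and the coproduct Δ), then D is a subcoalgebra of the transmuted braided group H_R, i.e. Δ_R(D) ⊆ D ⊗ D. -/
open TensorProduct LinearMap

variable (K : Type) [Field K] (H : Type) [Ring H] [HopfAlgebra K H]

/-- The left adjoint action as a linear map `H ⊗ H →ₗ H`, `h ⊗ a ↦ Σ h₍₁₎ * a * S(h₍₂₎)`. -/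
noncomputable def adMap : H ⊗[K] H →ₗ[K] H :=
  (LinearMap.mul' K H) ∘ₗ
    (LinearMap.lTensor H ((LinearMap.mul' K H) ∘ₗ
      (LinearMap.lTensor H (HopfAlgebra.antipode (R := K))) ∘ₗ
      (TensorProduct.comm K H H).toLinearMap)) ∘ₗ
    (TensorProduct.assoc K H H H).toLinearMap ∘ₗ
    (LinearMap.rTensor H (Coalgebra.comul (R := K)))

/-- `h ·_ad a = Σ h₍₁₎ a S(h₍₂₎)`. -/
noncomputable def adAct (h a : H) : H := adMap K H (h ⊗ₜ a)

/-- `R¹² = Σ r¹ ⊗ r² ⊗ 1` in `H ⊗ (H ⊗ H)`. -/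
noncomputable def r12 (R : H ⊗[K] H) : H ⊗[K] (H ⊗[K] H) :=
  TensorProduct.map LinearMap.id ((TensorProduct.mk K H H).flip 1) R

/-- `R¹³ = Σ r¹ ⊗ 1 ⊗ r²` in `H ⊗ (H ⊗ H)`. -/
noncomputable def r13 (R : H ⊗[K] H) : H ⊗[K] (H ⊗[K] H) :=
  TensorProduct.map LinearMap.id (TensorProduct.mk K H H 1) R

/-- `R²³ = 1 ⊗ R` in `H ⊗ (H ⊗ H)`. -/
noncomputable def r23 (R : H ⊗[K] H) : H ⊗[K] (H ⊗[K] H) := (1 : H) ⊗ₜ R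

/-- `(H,R)` is a quasi-triangular Hopf algebra: `R` is invertible,
`R Δ(h) = Δᶜᵒᵖ(h) R`, `(Δ⊗id)(R) = R¹³R²³` and `(id⊗Δ)(R) = R¹³R¹²`. -/
structure IsQuasiTriangular (R : H ⊗[K] H) : Prop where
  isUnit : IsUnit R
  intertwine : ∀ h : H, R * Coalgebra.comul h =
    (TensorProduct.comm K H H) (Coalgebra.comul h) * R
  comul_rTensor : (TensorProduct.assoc K H H H)
      ((LinearMap.rTensor H (Coalgebra.comul (R := K))) R) = r13 K H R * r23 K H R
  comul_lTensor : (LinearMap.lTensor H (Coalgebra.comul (R := K))) R = r13 K H R * r12 K H R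

/-- The comultiplication `Δ_R` of the transmuted braided group `H_R`:
`Δ_R(h) = Σ h₍₁₎ S(R²) ⊗ R¹ ·_ad h₍₂₎`. -/
noncomputable def deltaR (R : H ⊗[K] H) : H →ₗ[K] H ⊗[K] H :=
  (TensorProduct.map
      ((LinearMap.mul' K H) ∘ₗ (LinearMap.lTensor H (HopfAlgebra.antipode (R := K))))
      ((adMap K H) ∘ₗ (TensorProduct.comm K H H).toLinearMap)) ∘ₗ
    (TensorProduct.tensorTensorTensorComm K H H H H).toLinearMap ∘ₗ
    (LinearMap.lTensor (H ⊗[K] H) (TensorProduct.comm K H H).toLinearMap) ∘ₗ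
    ((TensorProduct.mk K (H ⊗[K] H) (H ⊗[K] H)).flip R) ∘ₗ
    (Coalgebra.comul (R := K))

/-- A Yetter–Drinfeld submodule of `H` (with the adjoint action and the coproduct):
a subspace stable under `·_ad` and a left subcomodule for `Δ`, i.e. `Δ(D) ⊆ H ⊗ D`. -/
def IsYDSubmodule (D : Submodule K H) : Prop :=
  (∀ (h : H), ∀ a ∈ D, adAct K H h a ∈ D) ∧
  (∀ a ∈ D, Coalgebra.comul (R := K) a ∈ Submodule.map₂ (TensorProduct.mk K H H) ⊤ D)


/-! ### Auxiliary machinery -/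


section ConvAPI

variable {C : Type} [AddCommGroup C] [Module K C] [Coalgebra K C]

/-- Convolution product of two linear maps from a coalgebra to `H`. -/
noncomputable def lconv (f g : C →ₗ[K] H) : C →ₗ[K] H :=
  (LinearMap.mul' K H) ∘ₗ (TensorProduct.map f g) ∘ₗ (Coalgebra.comul (R := K))

lemma lconv_repr {ι : Type*} (f g : C →ₗ[K] H) (c : C) (r : Coalgebra.Repr K c ι) :
    lconv K H f g c = ∑ i ∈ r.index, f (r.left i) * g (r.right i) := by
  simp [lconv, ← r.eq, map_sum]

lemma lconv_assoc (f g h : C →ₗ[K] H) :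
    lconv K H (lconv K H f g) h = lconv K H f (lconv K H g h) := by
  apply LinearMap.ext; intro c
  set r := Coalgebra.Repr.arbitrary K c with hr
  set r1 : ∀ i : r.ι, Coalgebra.Repr K (r.left i) (C × C) :=
    fun i => Coalgebra.Repr.arbitrary K (r.left i) with hr1
  set r2 : ∀ i : r.ι, Coalgebra.Repr K (r.right i) (C × C) :=
    fun i => Coalgebra.Repr.arbitrary K (r.right i) with hr2
  have key := Coalgebra.sum_tmul_tmul_eq (R := K) r r1 r2
  have key2 := congrArg ((LinearMap.mul' K H) ∘ₗ
    (TensorProduct.map f ((LinearMap.mul' K H) ∘ₗ TensorProduct.map g h))) key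
  simp only [map_sum, LinearMap.comp_apply, TensorProduct.map_tmul, LinearMap.mul'_apply] at key2
  calc lconv K H (lconv K H f g) h c
      = ∑ i ∈ r.index, lconv K H f g (r.left i) * h (r.right i) := lconv_repr K H _ _ c r
    _ = ∑ i ∈ r.index, (∑ j ∈ (r1 i).index, f ((r1 i).left j) * g ((r1 i).right j)) *
          h (r.right i) := by
        refine Finset.sum_congr rfl fun i _ => ?_
        rw [lconv_repr K H f g (r.left i) (r1 i)]
    _ = ∑ i ∈ r.index, ∑ j ∈ (r1 i).index,
          f ((r1 i).left j) * (g ((r1 i).right j) * h (r.right i)) := by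
        simp [Finset.sum_mul, mul_assoc]
    _ = ∑ i ∈ r.index, ∑ j ∈ (r2 i).index,
          f (r.left i) * (g ((r2 i).left j) * h ((r2 i).right j)) := key2
    _ = ∑ i ∈ r.index, f (r.left i) * lconv K H g h (r.right i) := by
        refine Finset.sum_congr rfl fun i _ => ?_
        rw [lconv_repr K H g h (r.right i) (r2 i), Finset.mul_sum]
    _ = lconv K H f (lconv K H g h) c := (lconv_repr K H _ _ c r).symm

lemma lconv_counit (f : C →ₗ[K] H) :
    lconv K H f ((Algebra.linearMap K H) ∘ₗ (Coalgebra.counit (R := K))) = f := by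
  apply LinearMap.ext; intro c
  set r := Coalgebra.Repr.arbitrary K c with hr
  have key := congrArg (TensorProduct.rid K C).toLinearMap (Coalgebra.sum_tmul_counit_eq r)
  simp only [map_sum, LinearEquiv.coe_coe, TensorProduct.rid_tmul, one_smul] at key
  have := congrArg f key
  rw [lconv_repr K H _ _ c r]
  simp only [map_sum, map_smul] at this
  rw [← this]
  refine Finset.sum_congr rfl fun i _ => ?_
  rw [LinearMap.comp_apply, Algebra.linearMap_apply, ← Algebra.commutes, ← Algebra.smul_def]

lemma counit_lconv (g : C →ₗ[K] H) :
    lconv K H ((Algebra.linearMap K H) ∘ₗ (Coalgebra.counit (R := K))) g = g := by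
  apply LinearMap.ext; intro c
  set r := Coalgebra.Repr.arbitrary K c with hr
  have key := congrArg (TensorProduct.lid K C).toLinearMap (Coalgebra.sum_counit_tmul_eq r)
  simp only [map_sum, LinearEquiv.coe_coe, TensorProduct.lid_tmul, one_smul] at key
  have := congrArg g key
  rw [lconv_repr K H _ _ c r]
  simp only [map_sum, map_smul] at this
  rw [← this]
  refine Finset.sum_congr rfl fun i _ => ?_
  rw [LinearMap.comp_apply, Algebra.linearMap_apply, ← Algebra.smul_def]

end ConvAPI

lemma antipode_one' : HopfAlgebra.antipode (R := K) (1 : H) = 1 := by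
  have := HopfAlgebra.mul_antipode_rTensor_comul_apply (R := K) (a := (1 : H))
  simpa [Algebra.TensorProduct.one_def] using this

/-- A representation of `comul (a*b)` from representations of `comul a` and `comul b`. -/
noncomputable def mulRepr {ι₁ ι₂ : Type*} (a b : H) (ra : Coalgebra.Repr K a ι₁)
    (rb : Coalgebra.Repr K b ι₂) :
    Coalgebra.Repr K (a * b) (ι₁ × ι₂) where
  index := ra.index ×ˢ rb.index
  left := fun p => ra.left p.1 * rb.left p.2
  right := fun p => ra.right p.1 * rb.right p.2
  eq := by
    rw [Finset.sum_product]
    rw [Bialgebra.comul_mul, ← ra.eq, ← rb.eq, Finset.sum_mul_sum]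
    simp [Algebra.TensorProduct.tmul_mul_tmul]

/-- A representation of `comul (a ⊗ₜ b)` in the tensor product coalgebra. -/
noncomputable def tmulRepr {ι₁ ι₂ : Type*} (a b : H) (ra : Coalgebra.Repr K a ι₁)
    (rb : Coalgebra.Repr K b ι₂) :
    Coalgebra.Repr K (a ⊗ₜ[K] b) (ι₁ × ι₂) where
  index := ra.index ×ˢ rb.index
  left := fun p => ra.left p.1 ⊗ₜ[K] rb.left p.2
  right := fun p => ra.right p.1 ⊗ₜ[K] rb.right p.2
  eq := by
    rw [Finset.sum_product]
    have : Coalgebra.comul (R := K) (a ⊗ₜ[K] b) =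
        TensorProduct.tensorTensorTensorComm K H H H H
          (TensorProduct.map Coalgebra.comul Coalgebra.comul (a ⊗ₜ[K] b)) := rfl
    rw [this]
    rw [TensorProduct.map_tmul, ← ra.eq, ← rb.eq, TensorProduct.sum_tmul]
    rw [map_sum]
    refine Finset.sum_congr rfl fun i _ => ?_
    rw [TensorProduct.tmul_sum, map_sum]
    refine Finset.sum_congr rfl fun j _ => ?_
    rw [TensorProduct.tensorTensorTensorComm_tmul]

lemma counit_tmul (a b : H) :
    Coalgebra.counit (R := K) (a ⊗ₜ[K] b) =
      Coalgebra.counit (R := K) a * Coalgebra.counit (R := K) b := by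
  rw [TensorProduct.counit_tmul, smul_eq_mul, mul_comm]

noncomputable def convF : H ⊗[K] H →ₗ[K] H :=
  (HopfAlgebra.antipode (R := K)) ∘ₗ (LinearMap.mul' K H)

noncomputable def convG : H ⊗[K] H →ₗ[K] H :=
  (LinearMap.mul' K H) ∘ₗ
    (TensorProduct.map (HopfAlgebra.antipode (R := K)) (HopfAlgebra.antipode (R := K))) ∘ₗ
    (TensorProduct.comm K H H).toLinearMap

noncomputable def convE : H ⊗[K] H →ₗ[K] H :=
  (Algebra.linearMap K H) ∘ₗ (Coalgebra.counit (R := K))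

lemma conv_mul_g : lconv K H (LinearMap.mul' K H) (convG K H) = convE K H := by
  apply TensorProduct.ext'
  intro a b
  set ra := Coalgebra.Repr.arbitrary K a
  set rb := Coalgebra.Repr.arbitrary K b
  rw [lconv_repr K H _ _ _ (tmulRepr K H a b ra rb)]
  dsimp only [tmulRepr]
  rw [Finset.sum_product]
  have step : ∀ i ∈ ra.index,
      (∑ j ∈ rb.index, (LinearMap.mul' K H) (ra.left i ⊗ₜ[K] rb.left j) *
        (convG K H) (ra.right i ⊗ₜ[K] rb.right j)) =
      Coalgebra.counit (R := K) b •
        (ra.left i * HopfAlgebra.antipode (R := K) (ra.right i)) := by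
    intro i _
    have term : ∀ j, (LinearMap.mul' K H) (ra.left i ⊗ₜ[K] rb.left j) *
        (convG K H) (ra.right i ⊗ₜ[K] rb.right j) =
        ra.left i * ((rb.left j * HopfAlgebra.antipode (R := K) (rb.right j)) *
          HopfAlgebra.antipode (R := K) (ra.right i)) := by
      intro j
      simp only [convG, LinearMap.comp_apply, LinearEquiv.coe_coe, TensorProduct.comm_tmul,
        TensorProduct.map_tmul, LinearMap.mul'_apply]
      simp [mul_assoc]
    calc (∑ j ∈ rb.index, (LinearMap.mul' K H) (ra.left i ⊗ₜ[K] rb.left j) *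
          (convG K H) (ra.right i ⊗ₜ[K] rb.right j))
        = ∑ j ∈ rb.index, ra.left i *
            ((rb.left j * HopfAlgebra.antipode (R := K) (rb.right j)) *
              HopfAlgebra.antipode (R := K) (ra.right i)) :=
          Finset.sum_congr rfl fun j _ => term j
      _ = ra.left i * ((∑ j ∈ rb.index, rb.left j * HopfAlgebra.antipode (R := K) (rb.right j)) *
            HopfAlgebra.antipode (R := K) (ra.right i)) := by
          rw [← Finset.mul_sum, ← Finset.sum_mul]
      _ = Coalgebra.counit (R := K) b •
            (ra.left i * HopfAlgebra.antipode (R := K) (ra.right i)) := by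
          rw [HopfAlgebra.sum_mul_antipode_eq_smul rb]
          rw [smul_mul_assoc, one_mul, mul_smul_comm]
  refine (Finset.sum_congr rfl step).trans ?_
  rw [← Finset.smul_sum, HopfAlgebra.sum_mul_antipode_eq_smul ra]
  simp only [convE, LinearMap.comp_apply, Algebra.linearMap_apply, counit_tmul]
  rw [smul_smul, Algebra.smul_def, mul_one, mul_comm]

lemma conv_f_mul : lconv K H (convF K H) (LinearMap.mul' K H) = convE K H := by
  apply TensorProduct.ext'
  intro a b
  set ra := Coalgebra.Repr.arbitrary K a
  set rb := Coalgebra.Repr.arbitrary K b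
  rw [lconv_repr K H _ _ _ (tmulRepr K H a b ra rb)]
  dsimp only [tmulRepr]
  have key := HopfAlgebra.sum_antipode_mul_eq_smul (mulRepr K H a b ra rb)
  dsimp only [mulRepr] at key
  simp only [convF, LinearMap.comp_apply, LinearMap.mul'_apply]
  rw [key]
  simp only [convE, LinearMap.comp_apply, Algebra.linearMap_apply, counit_tmul]
  rw [Bialgebra.counit_mul, Algebra.smul_def, mul_one]

lemma antipode_mul' (a b : H) :
    HopfAlgebra.antipode (R := K) (a * b) =
      HopfAlgebra.antipode (R := K) b * HopfAlgebra.antipode (R := K) a := by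
  have hfg : convF K H = convG K H := by
    calc convF K H = lconv K H (convF K H) (convE K H) := (lconv_counit K H _).symm
      _ = lconv K H (convF K H) (lconv K H (LinearMap.mul' K H) (convG K H)) := by
          rw [conv_mul_g]
      _ = lconv K H (lconv K H (convF K H) (LinearMap.mul' K H)) (convG K H) := by
          rw [lconv_assoc]
      _ = lconv K H (convE K H) (convG K H) := by rw [conv_f_mul]
      _ = convG K H := counit_lconv K H _
  have := congrArg (fun φ : H ⊗[K] H →ₗ[K] H => φ (a ⊗ₜ[K] b)) hfg
  simpa [convF, convG] using this


set_option synthInstance.maxHeartbeats 400000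
set_option maxHeartbeats 1000000
set_option maxRecDepth 8000

section CounitLemmas

/-- `(ε ⊗ id)` as an algebra map `H ⊗ B →ₐ B`. -/
noncomputable def epsLa (B : Type) [Ring B] [Algebra K B] : (H ⊗[K] B) →ₐ[K] B :=
  (Algebra.TensorProduct.lid K B).toAlgHom.comp
    (Algebra.TensorProduct.map (Bialgebra.counitAlgHom K H) (AlgHom.id K B))

/-- `(id ⊗ ε)` as an algebra map `B ⊗ H →ₐ B`. -/
noncomputable def epsRa (B : Type) [Ring B] [Algebra K B] : (B ⊗[K] H) →ₐ[K] B :=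
  (Algebra.TensorProduct.rid K K B).toAlgHom.comp
    (Algebra.TensorProduct.map (AlgHom.id K B) (Bialgebra.counitAlgHom K H))

@[simp] lemma epsLa_tmul (B : Type) [Ring B] [Algebra K B] (a : H) (b : B) :
    epsLa K H B (a ⊗ₜ[K] b) = Coalgebra.counit (R := K) a • b := by
  simp [epsLa, Algebra.TensorProduct.lid_tmul]

@[simp] lemma epsRa_tmul (B : Type) [Ring B] [Algebra K B] (b : B) (a : H) :
    epsRa K H B (b ⊗ₜ[K] a) = Coalgebra.counit (R := K) a • b := by
  simp [epsRa, Algebra.TensorProduct.rid_tmul]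

lemma epsLa_comul (u : H) : epsLa K H H (Coalgebra.comul (R := K) u) = u := by
  have h1 : ∀ ζ : H ⊗[K] H, epsLa K H H ζ =
      (TensorProduct.lid K H) ((Coalgebra.counit (R := K)).rTensor H ζ) := by
    intro ζ
    induction ζ using TensorProduct.induction_on with
    | zero => simp
    | tmul a b => simp [TensorProduct.lid_tmul]
    | add x y hx hy => rw [map_add, map_add, map_add, hx, hy]
  rw [h1, Coalgebra.rTensor_counit_comul, TensorProduct.lid_tmul, one_smul]

lemma epsRa_comul (u : H) : epsRa K H H (Coalgebra.comul (R := K) u) = u := by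
  have h1 : ∀ ζ : H ⊗[K] H, epsRa K H H ζ =
      (TensorProduct.rid K H) ((Coalgebra.counit (R := K)).lTensor H ζ) := by
    intro ζ
    induction ζ using TensorProduct.induction_on with
    | zero => simp
    | tmul a b => simp [TensorProduct.rid_tmul]
    | add x y hx hy => rw [map_add, map_add, map_add, hx, hy]
  rw [h1, Coalgebra.lTensor_counit_comul, TensorProduct.rid_tmul, one_smul]

variable {K H} in
/-- `(ε ⊗ id) R = 1` for a quasi-triangular `R`. -/
lemma eps_left_R {R : H ⊗[K] H} (hR : IsQuasiTriangular K H R) : epsLa K H H R = 1 := by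
  have key := congrArg (epsLa K H (H ⊗[K] H)) hR.comul_rTensor
  have lhs : ∀ ζ : H ⊗[K] H, epsLa K H (H ⊗[K] H) ((TensorProduct.assoc K H H H)
      ((LinearMap.rTensor H (Coalgebra.comul (R := K))) ζ)) = ζ := by
    intro ζ
    have aux : ∀ (ω : H ⊗[K] H) (v : H), epsLa K H (H ⊗[K] H)
        ((TensorProduct.assoc K H H H) (ω ⊗ₜ[K] v)) = (epsLa K H H ω) ⊗ₜ[K] v := by
      intro ω v
      induction ω using TensorProduct.induction_on with
      | zero => simp
      | tmul p q => simp [TensorProduct.assoc_tmul, TensorProduct.smul_tmul']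
      | add x y hx hy => rw [add_tmul, map_add, map_add, hx, hy, map_add, add_tmul]
    induction ζ using TensorProduct.induction_on with
    | zero => simp
    | tmul u v => rw [LinearMap.rTensor_tmul, aux, epsLa_comul]
    | add x y hx hy => rw [map_add, map_add, map_add, hx, hy]
  have r13aux : ∀ X : H ⊗[K] H, epsLa K H (H ⊗[K] H) (r13 K H X) =
      (1 : H) ⊗ₜ[K] (epsLa K H H X) := by
    intro X
    induction X using TensorProduct.induction_on with
    | zero => simp [r13]
    | tmul u v =>
        simp only [r13, TensorProduct.map_tmul, LinearMap.id_coe, id_eq,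
          TensorProduct.mk_apply, epsLa_tmul, TensorProduct.tmul_smul]
    | add x y hx hy => simp only [r13, map_add, tmul_add] at hx hy ⊢; rw [hx, hy]
  have r23aux : epsLa K H (H ⊗[K] H) (r23 K H R) = R := by
    simp [r23]
  rw [lhs, map_mul, r13aux, r23aux] at key
  have cancel : (1 : H) ⊗ₜ[K] (epsLa K H H R) = 1 := by
    refine hR.isUnit.mul_right_cancel ?_
    rw [← key, one_mul]
  have := congrArg (epsLa K H H) cancel
  rwa [epsLa_tmul, Bialgebra.counit_one, one_smul, map_one] at this

variable {K H} in
/-- `(id ⊗ ε) R = 1` for a quasi-triangular `R`. -/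
lemma eps_right_R {R : H ⊗[K] H} (hR : IsQuasiTriangular K H R) : epsRa K H H R = 1 := by
  set A2 := Algebra.TensorProduct.map (AlgHom.id K H) (epsLa K H H) with hA2
  have key := congrArg A2 hR.comul_lTensor
  have lhs : ∀ ζ : H ⊗[K] H, A2 ((LinearMap.lTensor H (Coalgebra.comul (R := K))) ζ) = ζ := by
    intro ζ
    induction ζ using TensorProduct.induction_on with
    | zero => simp
    | tmul u v => simp [hA2, epsLa_comul]
    | add x y hx hy => rw [map_add, map_add, hx, hy]
  have r13aux : ∀ X : H ⊗[K] H, A2 (r13 K H X) = X := by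
    intro X
    induction X using TensorProduct.induction_on with
    | zero => simp [r13]
    | tmul u v => simp [r13, hA2]
    | add x y hx hy => simp only [r13, map_add] at hx hy ⊢; rw [hx, hy]
  have r12aux : ∀ X : H ⊗[K] H, A2 (r12 K H X) = (epsRa K H H X) ⊗ₜ[K] (1 : H) := by
    intro X
    induction X using TensorProduct.induction_on with
    | zero => simp [r12]
    | tmul u v => simp [r12, hA2, TensorProduct.smul_tmul']
    | add x y hx hy =>
        simp only [r12, map_add, add_tmul] at hx hy ⊢; rw [hx, hy]
  rw [lhs, map_mul, r13aux, r12aux] at key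
  have cancel : (epsRa K H H R) ⊗ₜ[K] (1 : H) = 1 := by
    refine hR.isUnit.mul_left_cancel ?_
    rw [← key, mul_one]
  have := congrArg (epsRa K H H) cancel
  rwa [epsRa_tmul, Bialgebra.counit_one, one_smul, map_one] at this

end CounitLemmas


section AntipodeR

variable {K H} (R : H ⊗[K] H)

/-- `(S ⊗ id) R` is a left inverse of `R`. -/
lemma sR_mul (hR : IsQuasiTriangular K H R) :
    (LinearMap.rTensor H (HopfAlgebra.antipode (R := K))) R * R = 1 := by
  set B1 : H ⊗[K] (H ⊗[K] H) →ₗ[K] H ⊗[K] H :=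
    (LinearMap.rTensor H
        ((LinearMap.mul' K H) ∘ₗ LinearMap.rTensor H (HopfAlgebra.antipode (R := K)))) ∘ₗ
      (TensorProduct.assoc K H H H).symm.toLinearMap with hB1
  have key := congrArg B1 hR.comul_rTensor
  have lhs : B1 ((TensorProduct.assoc K H H H)
      ((LinearMap.rTensor H (Coalgebra.comul (R := K))) R)) = 1 := by
    have aux : ∀ ζ : H ⊗[K] H, B1 ((TensorProduct.assoc K H H H)
        ((LinearMap.rTensor H (Coalgebra.comul (R := K))) ζ)) =
        (1 : H) ⊗ₜ[K] epsLa K H H ζ := by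
      intro ζ
      induction ζ using TensorProduct.induction_on with
      | zero => rw [map_zero, map_zero, map_zero, map_zero, TensorProduct.tmul_zero]
      | tmul u v =>
          rw [LinearMap.rTensor_tmul, hB1, LinearMap.comp_apply, LinearEquiv.coe_toLinearMap,
            LinearEquiv.symm_apply_apply, LinearMap.rTensor_tmul, LinearMap.comp_apply,
            HopfAlgebra.mul_antipode_rTensor_comul_apply, epsLa_tmul]
          simp [Algebra.algebraMap_eq_smul_one, TensorProduct.smul_tmul]
      | add x y hx hy =>
          rw [map_add, map_add, map_add, hx, hy, map_add, TensorProduct.tmul_add]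
    rw [aux, eps_left_R hR, Algebra.TensorProduct.one_def]
  have rhs : ∀ X Y : H ⊗[K] H, B1 (r13 K H X * r23 K H Y) =
      ((LinearMap.rTensor H (HopfAlgebra.antipode (R := K))) X) * Y := by
    intro X Y
    induction X using TensorProduct.induction_on with
    | zero => simp [r13]
    | tmul u v =>
        induction Y using TensorProduct.induction_on with
        | zero => simp [r13, r23]
        | tmul p q =>
            rw [r13, r23, TensorProduct.map_tmul, Algebra.TensorProduct.tmul_mul_tmul]
            rw [hB1, LinearMap.comp_apply, LinearEquiv.coe_toLinearMap]
            rw [LinearMap.id_coe, id_eq, TensorProduct.mk_apply,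
              Algebra.TensorProduct.tmul_mul_tmul, one_mul, mul_one]
            rw [TensorProduct.assoc_symm_tmul, LinearMap.rTensor_tmul,
              LinearMap.comp_apply, LinearMap.rTensor_tmul, LinearMap.mul'_apply,
              LinearMap.rTensor_tmul, Algebra.TensorProduct.tmul_mul_tmul]
        | add y1 y2 h1 h2 =>
            rw [r23] at h1 h2 ⊢
            rw [TensorProduct.tmul_add, mul_add, map_add, h1, h2, mul_add]
    | add x1 x2 h1 h2 =>
        rw [r13] at h1 h2 ⊢
        rw [map_add, add_mul, map_add, h1, h2, map_add, add_mul]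
  rw [lhs, rhs] at key
  exact key.symm

/-- `(S ⊗ id) R` is a right inverse of `R`. -/
lemma mul_sR (hR : IsQuasiTriangular K H R) :
    R * (LinearMap.rTensor H (HopfAlgebra.antipode (R := K))) R = 1 := by
  set B2 : H ⊗[K] (H ⊗[K] H) →ₗ[K] H ⊗[K] H :=
    (LinearMap.rTensor H
        ((LinearMap.mul' K H) ∘ₗ LinearMap.lTensor H (HopfAlgebra.antipode (R := K)))) ∘ₗ
      (TensorProduct.assoc K H H H).symm.toLinearMap with hB2
  have key := congrArg B2 hR.comul_rTensor
  have lhs : B2 ((TensorProduct.assoc K H H H)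
      ((LinearMap.rTensor H (Coalgebra.comul (R := K))) R)) = 1 := by
    have aux : ∀ ζ : H ⊗[K] H, B2 ((TensorProduct.assoc K H H H)
        ((LinearMap.rTensor H (Coalgebra.comul (R := K))) ζ)) =
        (1 : H) ⊗ₜ[K] epsLa K H H ζ := by
      intro ζ
      induction ζ using TensorProduct.induction_on with
      | zero => rw [map_zero, map_zero, map_zero, map_zero, TensorProduct.tmul_zero]
      | tmul u v =>
          rw [LinearMap.rTensor_tmul, hB2, LinearMap.comp_apply, LinearEquiv.coe_toLinearMap,
            LinearEquiv.symm_apply_apply, LinearMap.rTensor_tmul, LinearMap.comp_apply,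
            HopfAlgebra.mul_antipode_lTensor_comul_apply, epsLa_tmul]
          simp [Algebra.algebraMap_eq_smul_one, TensorProduct.smul_tmul]
      | add x y hx hy =>
          rw [map_add, map_add, map_add, hx, hy, map_add, TensorProduct.tmul_add]
    rw [aux, eps_left_R hR, Algebra.TensorProduct.one_def]
  have rhs : ∀ X Y : H ⊗[K] H, B2 (r13 K H X * r23 K H Y) =
      X * ((LinearMap.rTensor H (HopfAlgebra.antipode (R := K))) Y) := by
    intro X Y
    induction X using TensorProduct.induction_on with
    | zero => simp [r13]
    | tmul u v =>
        induction Y using TensorProduct.induction_on with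
        | zero => simp [r13, r23]
        | tmul p q =>
            rw [r13, r23, TensorProduct.map_tmul, Algebra.TensorProduct.tmul_mul_tmul]
            rw [hB2, LinearMap.comp_apply, LinearEquiv.coe_toLinearMap]
            rw [LinearMap.id_coe, id_eq, TensorProduct.mk_apply,
              Algebra.TensorProduct.tmul_mul_tmul, one_mul, mul_one]
            rw [TensorProduct.assoc_symm_tmul, LinearMap.rTensor_tmul,
              LinearMap.comp_apply, LinearMap.lTensor_tmul, LinearMap.mul'_apply,
              LinearMap.rTensor_tmul, Algebra.TensorProduct.tmul_mul_tmul]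
        | add y1 y2 h1 h2 =>
            rw [r23] at h1 h2 ⊢
            rw [TensorProduct.tmul_add, mul_add, map_add, h1, h2, map_add, mul_add]
    | add x1 x2 h1 h2 =>
        rw [r13] at h1 h2 ⊢
        rw [map_add, add_mul, map_add, h1, h2, add_mul]
  rw [lhs, rhs] at key
  exact key.symm

end AntipodeR


section SSR

lemma r12_mul : ∀ X Y : H ⊗[K] H, r12 K H (X * Y) = r12 K H X * r12 K H Y := by
  intro X Y
  induction X using TensorProduct.induction_on with
  | zero => simp [r12]
  | tmul u v =>
      induction Y using TensorProduct.induction_on with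
      | zero => simp [r12]
      | tmul p q =>
          simp only [Algebra.TensorProduct.tmul_mul_tmul, r12, TensorProduct.map_tmul,
            LinearMap.id_coe, id_eq, TensorProduct.mk_apply, LinearMap.flip_apply,
            one_mul, mul_one]
      | add y1 y2 h1 h2 =>
          simp only [r12, mul_add, map_add] at h1 h2 ⊢; rw [h1, h2]
  | add x1 x2 h1 h2 =>
      simp only [r12, add_mul, map_add] at h1 h2 ⊢; rw [h1, h2]

lemma r13_mul : ∀ X Y : H ⊗[K] H, r13 K H (X * Y) = r13 K H X * r13 K H Y := by
  intro X Y
  induction X using TensorProduct.induction_on with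
  | zero => simp [r13]
  | tmul u v =>
      induction Y using TensorProduct.induction_on with
      | zero => simp [r13]
      | tmul p q =>
          simp only [Algebra.TensorProduct.tmul_mul_tmul, r13, TensorProduct.map_tmul,
            LinearMap.id_coe, id_eq, TensorProduct.mk_apply, one_mul, mul_one]
      | add y1 y2 h1 h2 =>
          simp only [r13, mul_add, map_add] at h1 h2 ⊢; rw [h1, h2]
  | add x1 x2 h1 h2 =>
      simp only [r13, add_mul, map_add] at h1 h2 ⊢; rw [h1, h2]

lemma r12_one : r12 K H 1 = 1 := by
  rw [Algebra.TensorProduct.one_def, r12, TensorProduct.map_tmul]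
  simp [Algebra.TensorProduct.one_def]

lemma r13_one : r13 K H 1 = 1 := by
  rw [Algebra.TensorProduct.one_def, r13, TensorProduct.map_tmul]
  simp [Algebra.TensorProduct.one_def]

variable {K H} (R : H ⊗[K] H)

/-- `(S ⊗ S) R = R` for quasi-triangular `R`. -/
lemma sS_R (hR : IsQuasiTriangular K H R) :
    (LinearMap.lTensor H (HopfAlgebra.antipode (R := K)))
      ((LinearMap.rTensor H (HopfAlgebra.antipode (R := K))) R) = R := by
  set Ri := (LinearMap.rTensor H (HopfAlgebra.antipode (R := K))) R with hRi
  have h1 : Ri * R = 1 := sR_mul R hR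
  have h2 : R * Ri = 1 := mul_sR R hR
  set Φ := Algebra.TensorProduct.map (AlgHom.id K H) (Bialgebra.comulAlgHom K H) with hΦ
  have c1 : ∀ ζ : H ⊗[K] H, Φ ζ = (LinearMap.lTensor H (Coalgebra.comul (R := K))) ζ := by
    intro ζ
    induction ζ using TensorProduct.induction_on with
    | zero => simp
    | tmul u v => simp [hΦ, Bialgebra.comulAlgHom_apply]
    | add x y hx hy => rw [map_add, map_add, hx, hy]
  have hΦR : Φ R = r13 K H R * r12 K H R := by rw [c1]; exact hR.comul_lTensor
  have hc : (r12 K H Ri * r13 K H Ri) * Φ R = 1 := by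
    rw [hΦR]
    calc (r12 K H Ri * r13 K H Ri) * (r13 K H R * r12 K H R)
        = r12 K H Ri * ((r13 K H Ri * r13 K H R) * r12 K H R) := by
          rw [mul_assoc, mul_assoc]
      _ = r12 K H Ri * (r13 K H (Ri * R) * r12 K H R) := by rw [r13_mul]
      _ = r12 K H Ri * r12 K H R := by rw [h1, r13_one, one_mul]
      _ = r12 K H (Ri * R) := (r12_mul K H _ _).symm
      _ = 1 := by rw [h1, r12_one]
  have huniq : r12 K H Ri * r13 K H Ri = Φ Ri := by
    have hR2 : Φ R * Φ Ri = 1 := by rw [← map_mul, h2, map_one]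
    calc r12 K H Ri * r13 K H Ri
        = (r12 K H Ri * r13 K H Ri) * (Φ R * Φ Ri) := by rw [hR2, mul_one]
      _ = ((r12 K H Ri * r13 K H Ri) * Φ R) * Φ Ri := (mul_assoc _ _ _).symm
      _ = Φ Ri := by rw [hc, one_mul]
  set M3 : H ⊗[K] (H ⊗[K] H) →ₗ[K] H ⊗[K] H :=
    LinearMap.lTensor H ((LinearMap.mul' K H) ∘ₗ
      LinearMap.lTensor H (HopfAlgebra.antipode (R := K))) with hM3
  have key := congrArg M3 (huniq.trans (c1 Ri))
  have m3A : ∀ ζ : H ⊗[K] H, M3 ((LinearMap.lTensor H (Coalgebra.comul (R := K))) ζ) =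
      (epsRa K H H ζ) ⊗ₜ[K] (1 : H) := by
    intro ζ
    induction ζ using TensorProduct.induction_on with
    | zero => simp
    | tmul u v =>
        rw [LinearMap.lTensor_tmul, hM3, LinearMap.lTensor_tmul, LinearMap.comp_apply,
          HopfAlgebra.mul_antipode_lTensor_comul_apply, epsRa_tmul]
        rw [Algebra.algebraMap_eq_smul_one, TensorProduct.tmul_smul, TensorProduct.smul_tmul']
    | add x y hx hy => rw [map_add, map_add, hx, hy, map_add, TensorProduct.add_tmul]
  have m3B : ∀ X Y : H ⊗[K] H, M3 (r12 K H X * r13 K H Y) =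
      X * ((LinearMap.lTensor H (HopfAlgebra.antipode (R := K))) Y) := by
    intro X Y
    induction X using TensorProduct.induction_on with
    | zero => simp [r12]
    | tmul u v =>
        induction Y using TensorProduct.induction_on with
        | zero => simp [r12, r13]
        | tmul p q =>
            simp only [r12, r13, TensorProduct.map_tmul, LinearMap.id_coe, id_eq,
              TensorProduct.mk_apply, LinearMap.flip_apply,
              Algebra.TensorProduct.tmul_mul_tmul, one_mul, mul_one, hM3,
              LinearMap.lTensor_tmul, LinearMap.comp_apply, LinearMap.mul'_apply]
        | add y1 y2 hy1 hy2 =>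
            simp only [r13, mul_add, map_add] at hy1 hy2 ⊢; rw [hy1, hy2]
    | add x1 x2 hx1 hx2 =>
        simp only [r12, add_mul, map_add] at hx1 hx2 ⊢; rw [hx1, hx2]
  rw [m3A, m3B] at key
  have hepsRi : epsRa K H H Ri = 1 := by
    have : ∀ ζ : H ⊗[K] H, epsRa K H H ((LinearMap.rTensor H (HopfAlgebra.antipode (R := K))) ζ)
        = HopfAlgebra.antipode (R := K) (epsRa K H H ζ) := by
      intro ζ
      induction ζ using TensorProduct.induction_on with
      | zero => simp
      | tmul u v => rw [LinearMap.rTensor_tmul, epsRa_tmul, epsRa_tmul, map_smul]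
      | add x y hx hy => rw [map_add, map_add, hx, hy, map_add, map_add]
    rw [hRi, this, eps_right_R hR, antipode_one']
  rw [hepsRi] at key
  have key2 : Ri * (LinearMap.lTensor H (HopfAlgebra.antipode (R := K))) Ri = 1 := by
    rw [key, Algebra.TensorProduct.one_def]
  calc (LinearMap.lTensor H (HopfAlgebra.antipode (R := K))) Ri
      = (R * Ri) * (LinearMap.lTensor H (HopfAlgebra.antipode (R := K))) Ri := by
        rw [h2, one_mul]
    _ = R * (Ri * (LinearMap.lTensor H (HopfAlgebra.antipode (R := K))) Ri) := by
        rw [mul_assoc]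
    _ = R := by rw [key2, mul_one]

end SSR


section Dagger

lemma sum_counit_smul {ι : Type*} (g : H) (r : Coalgebra.Repr K g ι) :
    ∑ i ∈ r.index, Coalgebra.counit (R := K) (r.left i) • r.right i = g := by
  have key := congrArg (TensorProduct.lid K H).toLinearMap (Coalgebra.sum_counit_tmul_eq r)
  rw [map_sum] at key
  simp only [LinearEquiv.coe_coe, TensorProduct.lid_tmul, one_smul] at key
  exact key

/-- The bilinear map `(a, ζ) ↦ (1 ⊗ S a) * (R * ζ)`. -/
noncomputable def lamBil (R : H ⊗[K] H) : H →ₗ[K] (H ⊗[K] H) →ₗ[K] (H ⊗[K] H) :=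
  LinearMap.mk₂ K (fun a ζ => ((1 : H) ⊗ₜ[K] HopfAlgebra.antipode (R := K) a) * (R * ζ))
    (fun a b ζ => by simp only [map_add, TensorProduct.tmul_add, add_mul])
    (fun c a ζ => by simp only [map_smul, TensorProduct.tmul_smul, smul_mul_assoc])
    (fun a ζ η => by simp only [mul_add])
    (fun c a ζ => by simp only [mul_smul_comm])

noncomputable def lamMap (R : H ⊗[K] H) : H ⊗[K] (H ⊗[K] H) →ₗ[K] H ⊗[K] H :=
  TensorProduct.lift (lamBil K H R)

@[simp] lemma lamMap_tmul (R : H ⊗[K] H) (a : H) (ζ : H ⊗[K] H) :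
    lamMap K H R (a ⊗ₜ[K] ζ) =
      ((1 : H) ⊗ₜ[K] HopfAlgebra.antipode (R := K) a) * (R * ζ) := by
  simp [lamMap, lamBil]

/-- The bilinear map `(a, ζ) ↦ (1 ⊗ S a) * τ(ζ)`. -/
noncomputable def psiBil : H →ₗ[K] (H ⊗[K] H) →ₗ[K] (H ⊗[K] H) :=
  LinearMap.mk₂ K
    (fun a ζ => ((1 : H) ⊗ₜ[K] HopfAlgebra.antipode (R := K) a) * ((TensorProduct.comm K H H) ζ))
    (fun a b ζ => by simp only [map_add, TensorProduct.tmul_add, add_mul])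
    (fun c a ζ => by simp only [map_smul, TensorProduct.tmul_smul, smul_mul_assoc])
    (fun a ζ η => by simp only [map_add, mul_add])
    (fun c a ζ => by simp only [map_smul, mul_smul_comm])

noncomputable def psiMap : H ⊗[K] (H ⊗[K] H) →ₗ[K] H ⊗[K] H :=
  TensorProduct.lift (psiBil K H)

@[simp] lemma psiMap_tmul (a : H) (ζ : H ⊗[K] H) :
    psiMap K H (a ⊗ₜ[K] ζ) =
      ((1 : H) ⊗ₜ[K] HopfAlgebra.antipode (R := K) a) * ((TensorProduct.comm K H H) ζ) := by
  simp [psiMap, psiBil]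

lemma psiMap_assoc_tmul (ω : H ⊗[K] H) (v : H) :
    psiMap K H ((TensorProduct.assoc K H H H) (ω ⊗ₜ[K] v)) =
      v ⊗ₜ[K] ((LinearMap.mul' K H)
        ((LinearMap.rTensor H (HopfAlgebra.antipode (R := K))) ω)) := by
  induction ω using TensorProduct.induction_on with
  | zero => simp
  | tmul p q =>
      rw [TensorProduct.assoc_tmul, psiMap_tmul, TensorProduct.comm_tmul,
        Algebra.TensorProduct.tmul_mul_tmul, one_mul, LinearMap.rTensor_tmul,
        LinearMap.mul'_apply]
  | add x y hx hy =>
      rw [TensorProduct.add_tmul, map_add, map_add, hx, hy, map_add, map_add,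
        TensorProduct.tmul_add]

variable {K H} in
/-- The key consequence of the intertwining axiom:
`(g ⊗ 1) R = Σ R¹ g₍₂₎ ⊗ S(g₍₁₎) R² g₍₃₎`. -/
lemma dagger {R : H ⊗[K] H} (hR : IsQuasiTriangular K H R) (g : H) :
    (g ⊗ₜ[K] (1 : H)) * R =
      lamMap K H R ((LinearMap.lTensor H (Coalgebra.comul (R := K)))
        (Coalgebra.comul (R := K) g)) := by
  set rg := Coalgebra.Repr.arbitrary K g with hrg
  have expand : lamMap K H R ((LinearMap.lTensor H (Coalgebra.comul (R := K)))
      (Coalgebra.comul (R := K) g)) =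
      ∑ i ∈ rg.index, ((1 : H) ⊗ₜ[K] HopfAlgebra.antipode (R := K) (rg.left i)) *
        (((TensorProduct.comm K H H) (Coalgebra.comul (R := K) (rg.right i))) * R) := by
    rw [← rg.eq, map_sum, map_sum]
    refine Finset.sum_congr rfl fun i _ => ?_
    rw [LinearMap.lTensor_tmul, lamMap_tmul, hR.intertwine]
  rw [expand]
  have factor : ∑ i ∈ rg.index, ((1 : H) ⊗ₜ[K] HopfAlgebra.antipode (R := K) (rg.left i)) *
      (((TensorProduct.comm K H H) (Coalgebra.comul (R := K) (rg.right i))) * R) =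
      (∑ i ∈ rg.index, ((1 : H) ⊗ₜ[K] HopfAlgebra.antipode (R := K) (rg.left i)) *
        ((TensorProduct.comm K H H) (Coalgebra.comul (R := K) (rg.right i)))) * R := by
    rw [Finset.sum_mul]
    exact Finset.sum_congr rfl fun i _ => (mul_assoc _ _ _).symm
  rw [factor]
  have club : (∑ i ∈ rg.index, ((1 : H) ⊗ₜ[K] HopfAlgebra.antipode (R := K) (rg.left i)) *
      ((TensorProduct.comm K H H) (Coalgebra.comul (R := K) (rg.right i)))) =
      g ⊗ₜ[K] (1 : H) := by
    calc (∑ i ∈ rg.index, ((1 : H) ⊗ₜ[K] HopfAlgebra.antipode (R := K) (rg.left i)) *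
        ((TensorProduct.comm K H H) (Coalgebra.comul (R := K) (rg.right i))))
        = ∑ i ∈ rg.index, psiMap K H (rg.left i ⊗ₜ[K] Coalgebra.comul (R := K) (rg.right i)) := by
          exact Finset.sum_congr rfl fun i _ => (psiMap_tmul K H _ _).symm
      _ = psiMap K H ((LinearMap.lTensor H (Coalgebra.comul (R := K)))
            (Coalgebra.comul (R := K) g)) := by
          rw [← rg.eq, map_sum, map_sum]
          exact Finset.sum_congr rfl fun i _ => by rw [LinearMap.lTensor_tmul]
      _ = psiMap K H ((TensorProduct.assoc K H H H)
            ((LinearMap.rTensor H (Coalgebra.comul (R := K)))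
              (Coalgebra.comul (R := K) g))) := by rw [Coalgebra.coassoc_apply]
      _ = g ⊗ₜ[K] (1 : H) := by
          rw [← rg.eq, map_sum, map_sum, map_sum]
          have step : ∀ i ∈ rg.index, psiMap K H ((TensorProduct.assoc K H H H)
              ((LinearMap.rTensor H (Coalgebra.comul (R := K))) (rg.left i ⊗ₜ[K] rg.right i))) =
              (Coalgebra.counit (R := K) (rg.left i) • rg.right i) ⊗ₜ[K] (1 : H) := by
            intro i _
            rw [LinearMap.rTensor_tmul, psiMap_assoc_tmul,
              HopfAlgebra.mul_antipode_rTensor_comul_apply,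
              Algebra.algebraMap_eq_smul_one, TensorProduct.tmul_smul,
              TensorProduct.smul_tmul']
          refine (Finset.sum_congr rfl step).trans ?_
          rw [← TensorProduct.sum_tmul, sum_counit_smul K H g rg]
  rw [club]

end Dagger


section MasterMaps

/-- `w ⊗ x ↦ x * S w`. -/
noncomputable def mulSL : H ⊗[K] H →ₗ[K] H :=
  (LinearMap.mul' K H) ∘ₗ (LinearMap.lTensor H (HopfAlgebra.antipode (R := K))) ∘ₗ
    (TensorProduct.comm K H H).toLinearMap

@[simp] lemma mulSL_tmul (w x : H) :
    mulSL K H (w ⊗ₜ[K] x) = x * HopfAlgebra.antipode (R := K) w := by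
  simp [mulSL]

/-- `(p ⊗ q) ⊗ y ↦ p * (y * S q)`. -/
noncomputable def sandwich : (H ⊗[K] H) ⊗[K] H →ₗ[K] H :=
  (LinearMap.mul' K H) ∘ₗ (LinearMap.lTensor H (mulSL K H)) ∘ₗ
    (TensorProduct.assoc K H H H).toLinearMap

@[simp] lemma sandwich_tmul (p q y : H) :
    sandwich K H ((p ⊗ₜ[K] q) ⊗ₜ[K] y) =
      p * (y * HopfAlgebra.antipode (R := K) q) := by
  simp [sandwich]

lemma adMap_eq_sandwich (u y : H) :
    adMap K H (u ⊗ₜ[K] y) = sandwich K H ((Coalgebra.comul (R := K) u) ⊗ₜ[K] y) := by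
  simp only [adMap, sandwich, mulSL, LinearMap.comp_apply, LinearMap.rTensor_tmul]

/-- `(p ⊗ (q ⊗ w)) ⊗ (x ⊗ y) ↦ (x * S w) ⊗ (p * (y * S q))`. -/
noncomputable def pBig : (H ⊗[K] (H ⊗[K] H)) ⊗[K] (H ⊗[K] H) →ₗ[K] H ⊗[K] H :=
  (TensorProduct.map (mulSL K H) (sandwich K H)) ∘ₗ
    (TensorProduct.tensorTensorTensorComm K H (H ⊗[K] H) H H).toLinearMap ∘ₗ
    (LinearMap.rTensor (H ⊗[K] H)
      ((TensorProduct.comm K (H ⊗[K] H) H).toLinearMap ∘ₗ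
        (TensorProduct.assoc K H H H).symm.toLinearMap))

@[simp] lemma pBig_tmul (p q w x y : H) :
    pBig K H ((p ⊗ₜ[K] (q ⊗ₜ[K] w)) ⊗ₜ[K] (x ⊗ₜ[K] y)) =
      (x * HopfAlgebra.antipode (R := K) w) ⊗ₜ[K]
        (p * (y * HopfAlgebra.antipode (R := K) q)) := by
  simp [pBig, TensorProduct.tensorTensorTensorComm_tmul, TensorProduct.assoc_symm_tmul]

/-- `r ⊗ (a ⊗ y) ↦ r * (y * a)`. -/
noncomputable def q1Map : H ⊗[K] (H ⊗[K] H) →ₗ[K] H :=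
  (LinearMap.mul' K H) ∘ₗ (LinearMap.lTensor H
    ((LinearMap.mul' K H) ∘ₗ (TensorProduct.comm K H H).toLinearMap))

@[simp] lemma q1Map_tmul (r a y : H) :
    q1Map K H (r ⊗ₜ[K] (a ⊗ₜ[K] y)) = r * (y * a) := by
  simp [q1Map]

/-- `r ⊗ (b ⊗ x) ↦ (x * b) * S r`. -/
noncomputable def q2Map : H ⊗[K] (H ⊗[K] H) →ₗ[K] H :=
  (LinearMap.mul' K H) ∘ₗ (TensorProduct.comm K H H).toLinearMap ∘ₗ
    (LinearMap.rTensor H (HopfAlgebra.antipode (R := K))) ∘ₗ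
    (LinearMap.lTensor H ((LinearMap.mul' K H) ∘ₗ (TensorProduct.comm K H H).toLinearMap))

@[simp] lemma q2Map_tmul (r b x : H) :
    q2Map K H (r ⊗ₜ[K] (b ⊗ₜ[K] x)) = (x * b) * HopfAlgebra.antipode (R := K) r := by
  simp [q2Map]

/-- `(r¹ ⊗ r²) ⊗ ((a ⊗ b) ⊗ (x ⊗ y)) ↦ ((x * b) * S r²) ⊗ (r¹ * (y * a))`. -/
noncomputable def p2Big : (H ⊗[K] H) ⊗[K] ((H ⊗[K] H) ⊗[K] (H ⊗[K] H)) →ₗ[K] H ⊗[K] H :=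
  (TensorProduct.comm K H H).toLinearMap ∘ₗ
    (TensorProduct.map (q1Map K H) (q2Map K H)) ∘ₗ
    (TensorProduct.tensorTensorTensorComm K H H (H ⊗[K] H) (H ⊗[K] H)).toLinearMap ∘ₗ
    (LinearMap.lTensor (H ⊗[K] H)
      ((TensorProduct.tensorTensorTensorComm K H H H H).toLinearMap ∘ₗ
        (LinearMap.lTensor (H ⊗[K] H) (TensorProduct.comm K H H).toLinearMap)))

@[simp] lemma p2Big_tmul (r1 r2 a b x y : H) :
    p2Big K H ((r1 ⊗ₜ[K] r2) ⊗ₜ[K] ((a ⊗ₜ[K] b) ⊗ₜ[K] (x ⊗ₜ[K] y))) =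
      ((x * b) * HopfAlgebra.antipode (R := K) r2) ⊗ₜ[K] (r1 * (y * a)) := by
  simp [p2Big, TensorProduct.tensorTensorTensorComm_tmul]

/-- `r ⊗ (x ⊗ d) ↦ (x * d) * S r`. -/
noncomputable def q3Map : H ⊗[K] (H ⊗[K] H) →ₗ[K] H :=
  (LinearMap.mul' K H) ∘ₗ (TensorProduct.comm K H H).toLinearMap ∘ₗ
    (LinearMap.rTensor H (HopfAlgebra.antipode (R := K))) ∘ₗ
    (LinearMap.lTensor H (LinearMap.mul' K H))

@[simp] lemma q3Map_tmul (r x d : H) :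
    q3Map K H (r ⊗ₜ[K] (x ⊗ₜ[K] d)) = (x * d) * HopfAlgebra.antipode (R := K) r := by
  simp [q3Map]

/-- `(r¹ ⊗ r²) ⊗ (x ⊗ (c ⊗ d)) ↦ ((x * d) * S r²) ⊗ (r¹ * c)`. -/
noncomputable def p4Big : (H ⊗[K] H) ⊗[K] (H ⊗[K] (H ⊗[K] H)) →ₗ[K] H ⊗[K] H :=
  (TensorProduct.map (q3Map K H) (LinearMap.mul' K H)) ∘ₗ
    (TensorProduct.tensorTensorTensorComm K H H (H ⊗[K] H) H).toLinearMap ∘ₗ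
    (LinearMap.rTensor ((H ⊗[K] H) ⊗[K] H) (TensorProduct.comm K H H).toLinearMap) ∘ₗ
    (LinearMap.lTensor (H ⊗[K] H)
      ((TensorProduct.assoc K H H H).symm.toLinearMap ∘ₗ
        (LinearMap.lTensor H (TensorProduct.comm K H H).toLinearMap)))

@[simp] lemma p4Big_tmul (r1 r2 x c d : H) :
    p4Big K H ((r1 ⊗ₜ[K] r2) ⊗ₜ[K] (x ⊗ₜ[K] (c ⊗ₜ[K] d))) =
      ((x * d) * HopfAlgebra.antipode (R := K) r2) ⊗ₜ[K] (r1 * c) := by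
  simp [p4Big, TensorProduct.tensorTensorTensorComm_tmul, TensorProduct.assoc_symm_tmul]

/-- `(p ⊗ (q ⊗ w)) ⊗ (x ⊗ y) ↦ (q * (y * S w)) ⊗ (p * x)`. -/
noncomputable def p7Big : (H ⊗[K] (H ⊗[K] H)) ⊗[K] (H ⊗[K] H) →ₗ[K] H ⊗[K] H :=
  (TensorProduct.comm K H H).toLinearMap ∘ₗ
    (TensorProduct.map (LinearMap.mul' K H) (sandwich K H)) ∘ₗ
    (TensorProduct.tensorTensorTensorComm K H (H ⊗[K] H) H H).toLinearMap

@[simp] lemma p7Big_tmul (p q w x y : H) :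
    p7Big K H ((p ⊗ₜ[K] (q ⊗ₜ[K] w)) ⊗ₜ[K] (x ⊗ₜ[K] y)) =
      (q * (y * HopfAlgebra.antipode (R := K) w)) ⊗ₜ[K] (p * x) := by
  simp [p7Big, TensorProduct.tensorTensorTensorComm_tmul]

/-- `(t¹ ⊗ t²) ⊗ (x ⊗ y) ↦ (t² ·ₐ y) ⊗ (t¹ * x)`. -/
noncomputable def xiUn : (H ⊗[K] H) ⊗[K] (H ⊗[K] H) →ₗ[K] H ⊗[K] H :=
  (TensorProduct.map (adMap K H) (LinearMap.mul' K H)) ∘ₗ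
    (TensorProduct.tensorTensorTensorComm K H H H H).toLinearMap ∘ₗ
    (LinearMap.lTensor (H ⊗[K] H) (TensorProduct.comm K H H).toLinearMap) ∘ₗ
    (LinearMap.rTensor (H ⊗[K] H) (TensorProduct.comm K H H).toLinearMap)

@[simp] lemma xiUn_tmul (t1 t2 x y : H) :
    xiUn K H ((t1 ⊗ₜ[K] t2) ⊗ₜ[K] (x ⊗ₜ[K] y)) =
      (adMap K H (t2 ⊗ₜ[K] y)) ⊗ₜ[K] (t1 * x) := by
  simp [xiUn, TensorProduct.tensorTensorTensorComm_tmul]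

/-- `y ↦ (y ⊗ 1) * T`. -/
noncomputable def rhoMap (T : H ⊗[K] H) : H →ₗ[K] H ⊗[K] H :=
  (LinearMap.mulRight K T) ∘ₗ ((TensorProduct.mk K H H).flip 1)

@[simp] lemma rhoMap_apply (T : H ⊗[K] H) (y : H) :
    rhoMap K H T y = (y ⊗ₜ[K] (1 : H)) * T := by
  simp [rhoMap]

end MasterMaps


section MasterClaims

lemma aux_pBig (v x y : H) (ω : H ⊗[K] H) :
    pBig K H (((TensorProduct.assoc K H H H) (ω ⊗ₜ[K] v)) ⊗ₜ[K] (x ⊗ₜ[K] y)) =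
      (x * HopfAlgebra.antipode (R := K) v) ⊗ₜ[K] (sandwich K H (ω ⊗ₜ[K] y)) := by
  induction ω using TensorProduct.induction_on with
  | zero => simp
  | tmul p q => rw [TensorProduct.assoc_tmul, pBig_tmul, sandwich_tmul]
  | add ω₁ ω₂ h1 h2 =>
      rw [TensorProduct.add_tmul, map_add, TensorProduct.add_tmul, map_add, h1, h2,
        TensorProduct.add_tmul, map_add, TensorProduct.tmul_add]

variable {K H} in
lemma claimA (T ξ : H ⊗[K] H) :
    (TensorProduct.map
        ((LinearMap.mul' K H) ∘ₗ (LinearMap.lTensor H (HopfAlgebra.antipode (R := K))))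
        ((adMap K H) ∘ₗ (TensorProduct.comm K H H).toLinearMap))
      ((TensorProduct.tensorTensorTensorComm K H H H H)
        ((LinearMap.lTensor (H ⊗[K] H) (TensorProduct.comm K H H).toLinearMap)
          (ξ ⊗ₜ[K] T))) =
    pBig K H (((TensorProduct.assoc K H H H)
        ((LinearMap.rTensor H (Coalgebra.comul (R := K))) T)) ⊗ₜ[K] ξ) := by
  induction T using TensorProduct.induction_on with
  | zero => simp
  | tmul u v =>
      induction ξ using TensorProduct.induction_on with
      | zero => simp
      | tmul x y =>
          simp only [LinearMap.lTensor_tmul, LinearEquiv.coe_coe, TensorProduct.comm_tmul,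
            TensorProduct.tensorTensorTensorComm_tmul, TensorProduct.map_tmul,
            LinearMap.rTensor_tmul, LinearMap.comp_apply, LinearMap.mul'_apply]
          rw [aux_pBig, ← adMap_eq_sandwich]
      | add ξ₁ ξ₂ h1 h2 =>
          rw [TensorProduct.add_tmul, map_add, map_add, map_add, h1, h2,
            TensorProduct.tmul_add, map_add]
  | add T₁ T₂ h1 h2 =>
      rw [TensorProduct.tmul_add, map_add, map_add, map_add, h1, h2, map_add, map_add,
        TensorProduct.add_tmul, map_add]

variable {K H} in
lemma claimC (X Y ξ : H ⊗[K] H) :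
    pBig K H ((r13 K H X * r23 K H Y) ⊗ₜ[K] ξ) =
      p2Big K H (X ⊗ₜ[K]
        (((LinearMap.lTensor H (HopfAlgebra.antipode (R := K)))
          ((LinearMap.rTensor H (HopfAlgebra.antipode (R := K))) Y)) ⊗ₜ[K] ξ)) := by
  induction X using TensorProduct.induction_on with
  | zero => simp [r13]
  | tmul u v =>
      induction Y using TensorProduct.induction_on with
      | zero => simp [r13, r23]
      | tmul p q =>
          induction ξ using TensorProduct.induction_on with
          | zero => simp
          | tmul x y =>
              rw [r13, r23, TensorProduct.map_tmul]
              simp only [LinearMap.id_coe, id_eq, TensorProduct.mk_apply]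
              rw [Algebra.TensorProduct.tmul_mul_tmul, Algebra.TensorProduct.tmul_mul_tmul,
                one_mul, pBig_tmul, LinearMap.rTensor_tmul, LinearMap.lTensor_tmul,
                p2Big_tmul, antipode_mul' K H v q]
              simp [mul_assoc]
          | add ξ₁ ξ₂ h1 h2 =>
              rw [TensorProduct.tmul_add, map_add, h1, h2, TensorProduct.tmul_add,
                TensorProduct.tmul_add, map_add]
      | add Y₁ Y₂ h1 h2 =>
          rw [r23] at h1 h2 ⊢
          rw [TensorProduct.tmul_add, mul_add, TensorProduct.add_tmul, map_add, h1, h2,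
            map_add, map_add, TensorProduct.add_tmul, TensorProduct.tmul_add, map_add]
  | add X₁ X₂ h1 h2 =>
      rw [r13] at h1 h2 ⊢
      rw [map_add, add_mul, TensorProduct.add_tmul, map_add, h1, h2,
        TensorProduct.add_tmul, map_add]

variable {K H} in
lemma claimE1 (X T ξ : H ⊗[K] H) :
    p2Big K H (X ⊗ₜ[K] (T ⊗ₜ[K] ξ)) =
      p4Big K H (X ⊗ₜ[K] ((LinearMap.lTensor H (rhoMap K H T)) ξ)) := by
  induction X using TensorProduct.induction_on with
  | zero => simp
  | tmul r1 r2 =>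
      induction T using TensorProduct.induction_on with
      | zero =>
          have h0 : rhoMap K H (0 : H ⊗[K] H) = 0 := by
            apply LinearMap.ext; intro g; simp
          simp [h0]
      | tmul c d =>
          induction ξ using TensorProduct.induction_on with
          | zero => simp
          | tmul x y =>
              rw [p2Big_tmul, LinearMap.lTensor_tmul, rhoMap_apply,
                Algebra.TensorProduct.tmul_mul_tmul, one_mul, p4Big_tmul]
          | add ξ₁ ξ₂ h1 h2 =>
              rw [TensorProduct.tmul_add, TensorProduct.tmul_add, map_add, h1, h2, map_add,
                TensorProduct.tmul_add, map_add]
      | add T₁ T₂ h1 h2 =>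
          have rho_add : rhoMap K H (T₁ + T₂) = rhoMap K H T₁ + rhoMap K H T₂ := by
            apply LinearMap.ext; intro g; simp [mul_add]
          rw [TensorProduct.add_tmul, TensorProduct.tmul_add, map_add, h1, h2, rho_add,
            LinearMap.lTensor_add, LinearMap.add_apply, TensorProduct.tmul_add, map_add]
  | add X₁ X₂ h1 h2 =>
      rw [TensorProduct.add_tmul, map_add, h1, h2, TensorProduct.add_tmul, map_add]

variable {K H} in
lemma claimI (X Y ξ : H ⊗[K] H) :
    p4Big K H (X ⊗ₜ[K] ((1 : H) ⊗ₜ[K] (Y * ξ))) =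
      p7Big K H ((r13 K H X * r12 K H Y) ⊗ₜ[K] ξ) := by
  induction X using TensorProduct.induction_on with
  | zero => simp [r13]
  | tmul r1 r2 =>
      induction Y using TensorProduct.induction_on with
      | zero => simp [r12]
      | tmul s1 s2 =>
          induction ξ using TensorProduct.induction_on with
          | zero => simp
          | tmul x y =>
              rw [Algebra.TensorProduct.tmul_mul_tmul, p4Big_tmul, r13, r12,
                TensorProduct.map_tmul, TensorProduct.map_tmul]
              simp only [LinearMap.id_coe, id_eq, TensorProduct.mk_apply,
                LinearMap.flip_apply]
              rw [Algebra.TensorProduct.tmul_mul_tmul, Algebra.TensorProduct.tmul_mul_tmul,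
                one_mul, mul_one, p7Big_tmul, one_mul, mul_assoc, mul_assoc]
          | add ξ₁ ξ₂ h1 h2 =>
              rw [mul_add, TensorProduct.tmul_add, TensorProduct.tmul_add, map_add, h1, h2,
                TensorProduct.tmul_add, map_add]
      | add Y₁ Y₂ h1 h2 =>
          rw [r12] at h1 h2 ⊢
          rw [add_mul, TensorProduct.tmul_add, TensorProduct.tmul_add, map_add, h1, h2,
            map_add, mul_add, TensorProduct.add_tmul, map_add]
  | add X₁ X₂ h1 h2 =>
      rw [r13] at h1 h2 ⊢
      rw [TensorProduct.add_tmul, map_add, h1, h2, map_add, add_mul,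
        TensorProduct.add_tmul, map_add]

lemma aux_p7 (t1 x y : H) (ω : H ⊗[K] H) :
    p7Big K H ((t1 ⊗ₜ[K] ω) ⊗ₜ[K] (x ⊗ₜ[K] y)) =
      (sandwich K H (ω ⊗ₜ[K] y)) ⊗ₜ[K] (t1 * x) := by
  induction ω using TensorProduct.induction_on with
  | zero => simp
  | tmul q w => rw [p7Big_tmul, sandwich_tmul]
  | add ω₁ ω₂ h1 h2 =>
      rw [TensorProduct.tmul_add, TensorProduct.add_tmul, map_add, h1, h2,
        TensorProduct.add_tmul, map_add, TensorProduct.add_tmul]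

variable {K H} in
lemma claimK (T ξ : H ⊗[K] H) :
    p7Big K H (((LinearMap.lTensor H (Coalgebra.comul (R := K))) T) ⊗ₜ[K] ξ) =
      xiUn K H (T ⊗ₜ[K] ξ) := by
  induction T using TensorProduct.induction_on with
  | zero => simp
  | tmul t1 t2 =>
      induction ξ using TensorProduct.induction_on with
      | zero => simp
      | tmul x y =>
          rw [LinearMap.lTensor_tmul, aux_p7, ← adMap_eq_sandwich, xiUn_tmul]
      | add ξ₁ ξ₂ h1 h2 =>
          rw [TensorProduct.tmul_add, map_add, h1, h2, TensorProduct.tmul_add, map_add]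
  | add T₁ T₂ h1 h2 =>
      rw [map_add, TensorProduct.add_tmul, map_add, h1, h2, TensorProduct.add_tmul, map_add]

end MasterClaims


section ClaimF

variable {K H} in
lemma claimG (h : H) :
    (TensorProduct.map
        ((LinearMap.mul' K H) ∘ₗ (LinearMap.lTensor H (HopfAlgebra.antipode (R := K))))
        (Coalgebra.comul (R := K)))
      ((LinearMap.rTensor H (Coalgebra.comul (R := K))) (Coalgebra.comul (R := K) h)) =
    (1 : H) ⊗ₜ[K] (Coalgebra.comul (R := K) h) := by
  set rh := Coalgebra.Repr.arbitrary K h with hrh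
  conv_lhs => rw [← rh.eq]
  rw [map_sum, map_sum]
  have step : ∀ i ∈ rh.index,
      (TensorProduct.map
        ((LinearMap.mul' K H) ∘ₗ (LinearMap.lTensor H (HopfAlgebra.antipode (R := K))))
        (Coalgebra.comul (R := K)))
        ((LinearMap.rTensor H (Coalgebra.comul (R := K))) (rh.left i ⊗ₜ[K] rh.right i)) =
      Coalgebra.counit (R := K) (rh.left i) •
        ((1 : H) ⊗ₜ[K] (Coalgebra.comul (R := K) (rh.right i))) := by
    intro i _
    rw [LinearMap.rTensor_tmul, TensorProduct.map_tmul, LinearMap.comp_apply,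
      HopfAlgebra.mul_antipode_lTensor_comul_apply, Algebra.algebraMap_eq_smul_one,
      TensorProduct.smul_tmul']
  refine (Finset.sum_congr rfl step).trans ?_
  have : ∑ i ∈ rh.index, Coalgebra.counit (R := K) (rh.left i) •
      ((1 : H) ⊗ₜ[K] (Coalgebra.comul (R := K) (rh.right i))) =
      (1 : H) ⊗ₜ[K] (Coalgebra.comul (R := K)
        (∑ i ∈ rh.index, Coalgebra.counit (R := K) (rh.left i) • rh.right i)) := by
    rw [map_sum, TensorProduct.tmul_sum]
    refine Finset.sum_congr rfl fun i _ => ?_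
    rw [map_smul, TensorProduct.tmul_smul]
  rw [this, sum_counit_smul K H h rh]

variable {K H} in
lemma claimF {R : H ⊗[K] H} (hR : IsQuasiTriangular K H R) (h : H) :
    p4Big K H (R ⊗ₜ[K] ((LinearMap.lTensor H (rhoMap K H R)) (Coalgebra.comul (R := K) h))) =
    p4Big K H (R ⊗ₜ[K] ((1 : H) ⊗ₜ[K] (R * Coalgebra.comul (R := K) h))) := by
  set Th : H ⊗[K] (H ⊗[K] H) →ₗ[K] H ⊗[K] H :=
    (p4Big K H) ∘ₗ (TensorProduct.mk K (H ⊗[K] H) (H ⊗[K] (H ⊗[K] H)) R) ∘ₗ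
      (LinearMap.lTensor H (LinearMap.mulLeft K R)) with hTh
  have Th_apply : ∀ (m : H) (ζ : H ⊗[K] H),
      Th (m ⊗ₜ[K] ζ) = p4Big K H (R ⊗ₜ[K] (m ⊗ₜ[K] (R * ζ))) := by
    intro m ζ
    simp [hTh]
  have F1 : ∀ (T' : H ⊗[K] H) (x w : H) (η : H ⊗[K] H),
      p4Big K H (T' ⊗ₜ[K] (x ⊗ₜ[K]
        (((1 : H) ⊗ₜ[K] HopfAlgebra.antipode (R := K) w) * η))) =
      p4Big K H (T' ⊗ₜ[K] ((x * HopfAlgebra.antipode (R := K) w) ⊗ₜ[K] η)) := by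
    intro T' x w η
    induction T' using TensorProduct.induction_on with
    | zero => simp
    | tmul r1 r2 =>
        induction η using TensorProduct.induction_on with
        | zero => simp
        | tmul c d =>
            rw [Algebra.TensorProduct.tmul_mul_tmul, one_mul, p4Big_tmul, p4Big_tmul]
            simp [mul_assoc]
        | add η₁ η₂ h1 h2 =>
            rw [mul_add, TensorProduct.tmul_add, TensorProduct.tmul_add, map_add, h1, h2,
              TensorProduct.tmul_add, TensorProduct.tmul_add, map_add]
    | add T₁ T₂ h1 h2 =>
        rw [TensorProduct.add_tmul, map_add, h1, h2, TensorProduct.add_tmul, map_add]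
  set rh := Coalgebra.Repr.arbitrary K h with hrh
  set r2 : ∀ i : rh.ι, Coalgebra.Repr K (rh.right i) (H × H) :=
    fun i => Coalgebra.Repr.arbitrary K (rh.right i) with hr2
  calc p4Big K H (R ⊗ₜ[K] ((LinearMap.lTensor H (rhoMap K H R)) (Coalgebra.comul (R := K) h)))
      = ∑ i ∈ rh.index, p4Big K H (R ⊗ₜ[K]
          (rh.left i ⊗ₜ[K] ((rh.right i ⊗ₜ[K] (1 : H)) * R))) := by
        rw [← rh.eq, map_sum, TensorProduct.tmul_sum, map_sum]
        refine Finset.sum_congr rfl fun i _ => ?_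
        rw [LinearMap.lTensor_tmul, rhoMap_apply]
    _ = ∑ i ∈ rh.index, p4Big K H (R ⊗ₜ[K] (rh.left i ⊗ₜ[K]
          (lamMap K H R ((LinearMap.lTensor H (Coalgebra.comul (R := K)))
            (Coalgebra.comul (R := K) (rh.right i)))))) := by
        refine Finset.sum_congr rfl fun i _ => ?_
        rw [dagger hR (rh.right i)]
    _ = ∑ i ∈ rh.index, ∑ j ∈ (r2 i).index, Th
          ((rh.left i * HopfAlgebra.antipode (R := K) ((r2 i).left j)) ⊗ₜ[K]
            (Coalgebra.comul (R := K) ((r2 i).right j))) := by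
        refine Finset.sum_congr rfl fun i _ => ?_
        rw [← (r2 i).eq, map_sum, map_sum, TensorProduct.tmul_sum, TensorProduct.tmul_sum,
          map_sum]
        refine Finset.sum_congr rfl fun j _ => ?_
        rw [LinearMap.lTensor_tmul, lamMap_tmul, F1]
        simp [hTh]
    _ = Th ((TensorProduct.map
          ((LinearMap.mul' K H) ∘ₗ (LinearMap.lTensor H (HopfAlgebra.antipode (R := K))))
          (Coalgebra.comul (R := K)))
          ((LinearMap.rTensor H (Coalgebra.comul (R := K))) (Coalgebra.comul (R := K) h))) := by
        rw [← Coalgebra.coassoc_symm_apply]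
        conv_rhs => rw [← rh.eq]
        simp only [map_sum, LinearMap.lTensor_tmul]
        refine Finset.sum_congr rfl fun i _ => ?_
        conv_rhs => rw [← (r2 i).eq]
        simp only [TensorProduct.tmul_sum, map_sum]
        refine Finset.sum_congr rfl fun j _ => ?_
        simp only [TensorProduct.assoc_symm_tmul, TensorProduct.map_tmul,
          LinearMap.comp_apply, LinearMap.lTensor_tmul, LinearMap.mul'_apply, hTh,
          TensorProduct.mk_apply, LinearMap.mulLeft_apply]
    _ = Th ((1 : H) ⊗ₜ[K] (Coalgebra.comul (R := K) h)) := by rw [claimG]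
    _ = p4Big K H (R ⊗ₜ[K] ((1 : H) ⊗ₜ[K] (R * Coalgebra.comul (R := K) h))) :=
        Th_apply 1 _

end ClaimF

section Master

variable {K H} in
/-- The master identity: `Δ_R h = Σ R² ·ₐ h₍₂₎ ⊗ R¹ h₍₁₎`. -/
lemma deltaR_eq_xiUn {R : H ⊗[K] H} (hR : IsQuasiTriangular K H R) (h : H) :
    deltaR K H R h = xiUn K H (R ⊗ₜ[K] Coalgebra.comul (R := K) h) := by
  have e0 : deltaR K H R h =
      (TensorProduct.map
        ((LinearMap.mul' K H) ∘ₗ (LinearMap.lTensor H (HopfAlgebra.antipode (R := K))))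
        ((adMap K H) ∘ₗ (TensorProduct.comm K H H).toLinearMap))
      ((TensorProduct.tensorTensorTensorComm K H H H H)
        ((LinearMap.lTensor (H ⊗[K] H) (TensorProduct.comm K H H).toLinearMap)
          ((Coalgebra.comul (R := K) h) ⊗ₜ[K] R))) := by
    simp only [deltaR, LinearMap.comp_apply, LinearEquiv.coe_coe, LinearMap.flip_apply,
      TensorProduct.mk_apply]
  rw [e0, claimA R (Coalgebra.comul (R := K) h), hR.comul_rTensor,
    claimC R R (Coalgebra.comul (R := K) h), sS_R R hR,
    claimE1 R R (Coalgebra.comul (R := K) h), claimF hR h,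
    claimI R R (Coalgebra.comul (R := K) h), ← hR.comul_lTensor,
    claimK R (Coalgebra.comul (R := K) h)]

end Master


section Membership

lemma deltaR_zero_apply (h : H) : deltaR K H 0 h = 0 := by
  simp [deltaR]

lemma deltaR_add_apply (T₁ T₂ : H ⊗[K] H) (h : H) :
    deltaR K H (T₁ + T₂) h = deltaR K H T₁ h + deltaR K H T₂ h := by
  simp [deltaR, TensorProduct.tmul_add]

lemma deltaR_tmul_apply (u v h : H) :
    deltaR K H (u ⊗ₜ[K] v) h =
      (TensorProduct.map (LinearMap.mulRight K (HopfAlgebra.antipode (R := K) v))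
        ((adMap K H) ∘ₗ (TensorProduct.mk K H H u))) (Coalgebra.comul (R := K) h) := by
  have e0 : deltaR K H (u ⊗ₜ[K] v) h =
      (TensorProduct.map
        ((LinearMap.mul' K H) ∘ₗ (LinearMap.lTensor H (HopfAlgebra.antipode (R := K))))
        ((adMap K H) ∘ₗ (TensorProduct.comm K H H).toLinearMap))
      ((TensorProduct.tensorTensorTensorComm K H H H H)
        ((LinearMap.lTensor (H ⊗[K] H) (TensorProduct.comm K H H).toLinearMap)
          ((Coalgebra.comul (R := K) h) ⊗ₜ[K] (u ⊗ₜ[K] v)))) := by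
    simp only [deltaR, LinearMap.comp_apply, LinearEquiv.coe_coe, LinearMap.flip_apply,
      TensorProduct.mk_apply]
  rw [e0]
  generalize (Coalgebra.comul (R := K) h) = ξ
  induction ξ using TensorProduct.induction_on with
  | zero => simp
  | tmul x y =>
      simp only [LinearMap.lTensor_tmul, LinearEquiv.coe_coe, TensorProduct.comm_tmul,
        TensorProduct.tensorTensorTensorComm_tmul, TensorProduct.map_tmul,
        LinearMap.comp_apply, LinearMap.mul'_apply, LinearMap.lTensor_tmul,
        LinearMap.mulRight_apply, TensorProduct.mk_apply]
  | add ξ₁ ξ₂ h1 h2 =>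
      rw [TensorProduct.add_tmul, map_add, map_add, map_add, h1, h2, map_add]

variable {K H} in
lemma goalA {D : Submodule K H} (hD : IsYDSubmodule K H D) {a : H} (ha : a ∈ D)
    (T : H ⊗[K] H) :
    deltaR K H T a ∈ Submodule.map₂ (TensorProduct.mk K H H) ⊤ D := by
  induction T using TensorProduct.induction_on with
  | zero => rw [deltaR_zero_apply]; exact zero_mem _
  | tmul u v =>
      rw [deltaR_tmul_apply]
      have hc := hD.2 a ha
      rw [Submodule.map₂_eq_span_image2] at hc
      refine Submodule.span_induction (p := fun x _ =>
          (TensorProduct.map (LinearMap.mulRight K (HopfAlgebra.antipode (R := K) v))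
            ((adMap K H) ∘ₗ (TensorProduct.mk K H H u))) x ∈
            Submodule.map₂ (TensorProduct.mk K H H) ⊤ D)
        ?_ ?_ ?_ ?_ hc
      · rintro ξ ⟨x, hx, d, hd, rfl⟩
        dsimp only [TensorProduct.mk_apply]
        rw [TensorProduct.map_tmul]
        exact Submodule.apply_mem_map₂ _ Submodule.mem_top (hD.1 u d hd)
      · rw [map_zero]; exact zero_mem _
      · intro x y _ _ hx hy
        rw [map_add]; exact add_mem hx hy
      · intro c x _ hx
        rw [map_smul]; exact Submodule.smul_mem _ c hx
  | add T₁ T₂ h1 h2 =>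
      rw [deltaR_add_apply]; exact add_mem h1 h2

variable {K H} in
lemma xiUn_mem {D : Submodule K H} (hD : IsYDSubmodule K H D)
    (T : H ⊗[K] H) {ξ : H ⊗[K] H}
    (hξ : ξ ∈ Submodule.map₂ (TensorProduct.mk K H H) ⊤ D) :
    xiUn K H (T ⊗ₜ[K] ξ) ∈ Submodule.map₂ (TensorProduct.mk K H H) D ⊤ := by
  induction T using TensorProduct.induction_on with
  | zero => rw [TensorProduct.zero_tmul, map_zero]; exact zero_mem _
  | tmul t1 t2 =>
      rw [Submodule.map₂_eq_span_image2] at hξ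
      refine Submodule.span_induction (p := fun x _ =>
          xiUn K H ((t1 ⊗ₜ[K] t2) ⊗ₜ[K] x) ∈
            Submodule.map₂ (TensorProduct.mk K H H) D ⊤)
        ?_ ?_ ?_ ?_ hξ
      · rintro ζ ⟨x, hx, d, hd, rfl⟩
        dsimp only [TensorProduct.mk_apply]
        rw [xiUn_tmul]
        exact Submodule.apply_mem_map₂ _ (hD.1 t2 d hd) Submodule.mem_top
      · rw [TensorProduct.tmul_zero, map_zero]; exact zero_mem _
      · intro x y _ _ hx hy
        rw [TensorProduct.tmul_add, map_add]; exact add_mem hx hy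
      · intro c x _ hx
        rw [TensorProduct.tmul_smul, map_smul]; exact Submodule.smul_mem _ c hx
  | add T₁ T₂ h1 h2 =>
      rw [TensorProduct.add_tmul, map_add]; exact add_mem h1 h2

variable {K H} in
lemma lTensor_fix {D : Submodule K H} {π : H →ₗ[K] H} (hπ : ∀ d ∈ D, π d = d)
    {x : H ⊗[K] H} (hx : x ∈ Submodule.map₂ (TensorProduct.mk K H H) ⊤ D) :
    (LinearMap.lTensor H π) x = x := by
  rw [Submodule.map₂_eq_span_image2] at hx
  refine Submodule.span_induction (p := fun x _ => (LinearMap.lTensor H π) x = x)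
    ?_ ?_ ?_ ?_ hx
  · rintro ζ ⟨u, _, d, hd, rfl⟩
    dsimp only [TensorProduct.mk_apply]
    rw [LinearMap.lTensor_tmul, hπ d hd]
  · rw [map_zero]
  · intro y z _ _ hy hz; rw [map_add, hy, hz]
  · intro c y _ hy; rw [map_smul, hy]

variable {K H} in
lemma rTensor_fix {D : Submodule K H} {π : H →ₗ[K] H} (hπ : ∀ d ∈ D, π d = d)
    {x : H ⊗[K] H} (hx : x ∈ Submodule.map₂ (TensorProduct.mk K H H) D ⊤) :
    (LinearMap.rTensor H π) x = x := by
  rw [Submodule.map₂_eq_span_image2] at hx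
  refine Submodule.span_induction (p := fun x _ => (LinearMap.rTensor H π) x = x)
    ?_ ?_ ?_ ?_ hx
  · rintro ζ ⟨d, hd, u, _, rfl⟩
    dsimp only [TensorProduct.mk_apply]
    rw [LinearMap.rTensor_tmul, hπ d hd]
  · rw [map_zero]
  · intro y z _ _ hy hz; rw [map_add, hy, hz]
  · intro c y _ hy; rw [map_smul, hy]

variable {K H} in
lemma proj_proj_mem {D : Submodule K H} {π : H →ₗ[K] H} (hπ : ∀ x, π x ∈ D)
    (x : H ⊗[K] H) :
    (LinearMap.rTensor H π) ((LinearMap.lTensor H π) x) ∈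
      Submodule.map₂ (TensorProduct.mk K H H) D D := by
  induction x using TensorProduct.induction_on with
  | zero => rw [map_zero, map_zero]; exact zero_mem _
  | tmul u v =>
      rw [LinearMap.lTensor_tmul, LinearMap.rTensor_tmul]
      exact Submodule.apply_mem_map₂ _ (hπ u) (hπ v)
  | add y z hy hz =>
      rw [map_add, map_add]; exact add_mem hy hz

end Membership


/-- If `(H,R)` is quasi-triangular and `D` is a Yetter–Drinfeld
submodule of `H`, then `D` is a subcoalgebra of the transmuted braided group `H_R`,
i.e. `Δ_R(D) ⊆ D ⊗ D`. -/
theorem yd_submodule_is_subcoalgebra_of_transmuted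
    (R : H ⊗[K] H) (hR : IsQuasiTriangular K H R)
    (D : Submodule K H) (hD : IsYDSubmodule K H D) :
    ∀ a ∈ D, deltaR K H R a ∈ Submodule.map₂ (TensorProduct.mk K H H) D D := by
  intro a ha
  obtain ⟨Q, hQ⟩ := Submodule.exists_isCompl D
  set π : H →ₗ[K] H := D.subtype ∘ₗ (D.linearProjOfIsCompl Q hQ) with hπdef
  have hπD : ∀ d ∈ D, π d = d := by
    intro d hd
    have := Submodule.linearProjOfIsCompl_apply_left hQ ⟨d, hd⟩
    simp only [hπdef, LinearMap.comp_apply, Submodule.subtype_apply]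
    exact congrArg Subtype.val this
  have hπr : ∀ x, π x ∈ D := by
    intro x
    simp only [hπdef, LinearMap.comp_apply, Submodule.subtype_apply]
    exact SetLike.coe_mem _
  have hA : deltaR K H R a ∈ Submodule.map₂ (TensorProduct.mk K H H) ⊤ D :=
    goalA hD ha R
  have hB : deltaR K H R a ∈ Submodule.map₂ (TensorProduct.mk K H H) D ⊤ := by
    rw [deltaR_eq_xiUn hR]
    exact xiUn_mem hD R (hD.2 a ha)
  have key : deltaR K H R a =
      (LinearMap.rTensor H π) ((LinearMap.lTensor H π) (deltaR K H R a)) := by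
    rw [lTensor_fix hπD hA, rTensor_fix hπD hB]
  rw [key]
  exact proj_proj_mem hπr _
end

section
/- Let (H,R) be a finite-dimensional quasi-triangular Hopf algebra over a field k. If H is unimodular and S² = id_H, then any left integral Λ of H is cocommutative with respect to the comultiplication Δ_R of the transmuted braided group, i.e. Σ Λ⁽¹⁾⊗Λ⁽²⁾ = Σ Λ⁽²⁾⊗Λ⁽¹⁾ where Δ_R(Λ) = Σ Λ⁽¹⁾⊗Λ⁽²⁾. -/
open TensorProduct LinearMap

set_option synthInstance.maxHeartbeats 1000000
set_option maxHeartbeats 1000000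

variable (K : Type) [Field K] (H : Type) [Ring H] [HopfAlgebra K H]

/-- `Λ` is a left integral for `H`: `hΛ = ε(h)Λ` for all `h`. -/
def IsLeftIntegral (Λ : H) : Prop := ∀ h : H, h * Λ = (Coalgebra.counit (R := K) h) • Λ

/-- `Λ` is a right integral for `H`: `Λh = ε(h)Λ` for all `h`. -/
def IsRightIntegral (Λ : H) : Prop := ∀ h : H, Λ * h = (Coalgebra.counit (R := K) h) • Λ


open Coalgebra HopfAlgebra

namespace DeltaRAux



variable {K : Type} [Field K] {H : Type} [Ring H] [HopfAlgebra K H]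

local notation "S°" => antipode (R := K) (A := H)

variable {C : Type} [AddCommGroup C] [Module K C] [Coalgebra K C]

theorem repr_sum_counit_right {a : C} {ι : Type} (r : Repr K a ι) :
    ∑ i ∈ r.index, counit (R := K) (r.right i) • r.left i = a := by
  have h := congrArg (TensorProduct.rid K C) (sum_tmul_counit_eq (R := K) r)
  rw [map_sum] at h
  simp only [TensorProduct.rid_tmul, one_smul] at h
  exact h

theorem repr_sum_counit_left {a : C} {ι : Type} (r : Repr K a ι) :
    ∑ i ∈ r.index, counit (R := K) (r.left i) • r.right i = a := by
  have h := congrArg (TensorProduct.lid K C) (sum_counit_tmul_eq (R := K) r)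
  rw [map_sum] at h
  simp only [TensorProduct.lid_tmul, one_smul] at h
  exact h

theorem convUnique
    (f φ g : C →ₗ[K] H)
    (h1 : ∀ c, mul' K H (TensorProduct.map f φ (comul (R := K) c)) =
      algebraMap K H (counit (R := K) c))
    (h2 : ∀ c, mul' K H (TensorProduct.map φ g (comul (R := K) c)) =
      algebraMap K H (counit (R := K) c))
    (c : C) : f c = g c := by
  classical
  set r := ℛ K c with hr
  let rL := fun i => ℛ K (r.left i)
  let rR := fun i => ℛ K (r.right i)
  have key := Coalgebra.sum_tmul_tmul_eq (R := K) r rL rR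
  apply_fun (mul' K H ∘ₗ (TensorProduct.map f (mul' K H ∘ₗ TensorProduct.map φ g))) at key
  simp only [map_sum, LinearMap.comp_apply, TensorProduct.map_tmul, mul'_apply] at key
  have inner1 : ∀ i, ∑ j ∈ (rL i).index, f ((rL i).left j) * φ ((rL i).right j) =
      algebraMap K H (counit (R := K) (r.left i)) := by
    intro i
    have h := h1 (r.left i)
    rw [← (rL i).eq] at h
    simpa [map_sum] using h
  have inner2 : ∀ i, ∑ j ∈ (rR i).index, φ ((rR i).left j) * g ((rR i).right j) =
      algebraMap K H (counit (R := K) (r.right i)) := by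
    intro i
    have h := h2 (r.right i)
    rw [← (rR i).eq] at h
    simpa [map_sum] using h
  have lhs : ∑ i ∈ r.index, ∑ j ∈ (rL i).index,
      f ((rL i).left j) * (φ ((rL i).right j) * g (r.right i)) = g c := by
    calc ∑ i ∈ r.index, ∑ j ∈ (rL i).index,
        f ((rL i).left j) * (φ ((rL i).right j) * g (r.right i))
        = ∑ i ∈ r.index, (∑ j ∈ (rL i).index,
            f ((rL i).left j) * φ ((rL i).right j)) * g (r.right i) := by
          simp [Finset.sum_mul, mul_assoc]
      _ = ∑ i ∈ r.index, counit (R := K) (r.left i) • g (r.right i) := by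
          refine Finset.sum_congr rfl fun i _ => ?_
          rw [inner1 i, ← Algebra.smul_def]
      _ = g c := by
          simp only [← map_smul, ← map_sum]
          rw [repr_sum_counit_left r]
  have rhs : ∑ i ∈ r.index, ∑ j ∈ (rR i).index,
      f (r.left i) * (φ ((rR i).left j) * g ((rR i).right j)) = f c := by
    calc ∑ i ∈ r.index, ∑ j ∈ (rR i).index,
        f (r.left i) * (φ ((rR i).left j) * g ((rR i).right j))
        = ∑ i ∈ r.index, f (r.left i) * (∑ j ∈ (rR i).index,
            φ ((rR i).left j) * g ((rR i).right j)) := by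
          simp [Finset.mul_sum]
      _ = ∑ i ∈ r.index, counit (R := K) (r.right i) • f (r.left i) := by
          refine Finset.sum_congr rfl fun i _ => ?_
          rw [inner2 i, ← Algebra.commutes, ← Algebra.smul_def]
      _ = f c := by
          simp only [← map_smul, ← map_sum]
          rw [repr_sum_counit_right r]
  rw [lhs] at key
  rw [rhs] at key
  exact key.symm

theorem comul_mul_repr {x y : H} {ι κ : Type} (rx : Repr K x ι) (ry : Repr K y κ) :
    comul (R := K) (x*y) = ∑ i ∈ rx.index, ∑ j ∈ ry.index,
      (rx.left i * ry.left j) ⊗ₜ[K] (rx.right i * ry.right j) := by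
  rw [Bialgebra.comul_mul, ← rx.eq, ← ry.eq, Finset.sum_mul_sum]
  exact Finset.sum_congr rfl fun i _ => Finset.sum_congr rfl fun j _ =>
    Algebra.TensorProduct.tmul_mul_tmul _ _ _ _

theorem S_one : S° (1 : H) = 1 := by
  have h := mul_antipode_rTensor_comul_apply (R := K) (1 : H)
  rw [Bialgebra.comul_one (R := K) (A := H), Algebra.TensorProduct.one_def] at h
  simpa using h

theorem S_algebraMap (c : K) : S° (algebraMap K H c) = algebraMap K H c := by
  rw [Algebra.algebraMap_eq_smul_one, map_smul, S_one]

theorem S_mul (a b : H) : S° (a * b) = S° b * S° a := by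
  have main := convUnique (K := K) (C := H ⊗[K] H)
    (S° ∘ₗ mul' K H) (mul' K H)
    (mul' K H ∘ₗ (TensorProduct.comm K H H).toLinearMap ∘ₗ TensorProduct.map S° S°)
    (fun c => by
      induction c using TensorProduct.induction_on with
      | zero => simp
      | add x y hx hy => simp only [map_add, hx, hy]
      | tmul x y =>
        classical
        have hcom : comul (R := K) (x ⊗ₜ[K] y) =
            TensorProduct.tensorTensorTensorComm K H H H H
              (comul (R := K) x ⊗ₜ comul (R := K) y) := rfl
        have hcou : counit (R := K) (x ⊗ₜ[K] y) =
            counit (R := K) x * counit (R := K) y := by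
            rw [TensorProduct.counit_tmul, smul_eq_mul, mul_comm]
        set rx := ℛ K x
        set ry := ℛ K y
        have hxy := mul_antipode_rTensor_comul_apply (R := K) (x * y)
        rw [comul_mul_repr rx ry] at hxy
        simp only [map_sum, rTensor_tmul, mul'_apply] at hxy
        rw [hcom, ← rx.eq, ← ry.eq, TensorProduct.sum_tmul]
        simp only [map_sum, TensorProduct.tmul_sum, TensorProduct.tensorTensorTensorComm_tmul,
          TensorProduct.map_tmul, mul'_apply, LinearMap.comp_apply]
        rw [hxy, hcou, Bialgebra.counit_mul])
    (fun c => by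
      induction c using TensorProduct.induction_on with
      | zero => simp
      | add x y hx hy => simp only [map_add, hx, hy]
      | tmul x y =>
        classical
        have hcom : comul (R := K) (x ⊗ₜ[K] y) =
            TensorProduct.tensorTensorTensorComm K H H H H
              (comul (R := K) x ⊗ₜ comul (R := K) y) := rfl
        have hcou : counit (R := K) (x ⊗ₜ[K] y) =
            counit (R := K) x * counit (R := K) y := by
            rw [TensorProduct.counit_tmul, smul_eq_mul, mul_comm]
        set rx := ℛ K x
        set ry := ℛ K y
        rw [hcom, ← rx.eq, ← ry.eq, TensorProduct.sum_tmul]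
        simp only [map_sum, TensorProduct.tmul_sum, TensorProduct.tensorTensorTensorComm_tmul,
          TensorProduct.map_tmul, mul'_apply, LinearMap.comp_apply,
          LinearEquiv.coe_coe, TensorProduct.comm_tmul]
        have step : ∀ i ∈ rx.index, ∑ j ∈ ry.index,
            rx.left i * ry.left j * (S° (ry.right j) * S° (rx.right i)) =
            counit (R := K) y • (rx.left i * S° (rx.right i)) := by
          intro i _
          have h0 : ∀ j ∈ ry.index, rx.left i * ry.left j * (S° (ry.right j) * S° (rx.right i))
              = rx.left i * ((ry.left j * S° (ry.right j)) * S° (rx.right i)) := by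
            intro j _
            rw [mul_assoc (rx.left i) (ry.left j), ← mul_assoc (ry.left j)]
          rw [Finset.sum_congr rfl h0, ← Finset.mul_sum, ← Finset.sum_mul,
            sum_mul_antipode_eq_algebraMap_counit ry, ← Algebra.smul_def, mul_smul_comm]
        rw [Finset.sum_congr rfl step, ← Finset.smul_sum, sum_mul_antipode_eq_algebraMap_counit rx, hcou]
        rw [Algebra.smul_def, ← map_mul, mul_comm])
    (a ⊗ₜ b)
  simpa using main

section S2

theorem H1a (hS2 : ∀ h : H, S° (S° h) = h) {a : H} {ι : Type} (r : Repr K a ι) :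
    ∑ i ∈ r.index, S° (r.right i) * r.left i = algebraMap K H (counit (R := K) a) := by
  have h := congrArg S° (sum_antipode_mul_eq_algebraMap_counit (R := K) r)
  rw [map_sum, S_algebraMap] at h
  calc ∑ i ∈ r.index, S° (r.right i) * r.left i
      = ∑ i ∈ r.index, S° (S° (r.left i) * r.right i) :=
        Finset.sum_congr rfl fun i _ => by rw [S_mul, hS2]
    _ = algebraMap K H (counit (R := K) a) := h

theorem H1b (hS2 : ∀ h : H, S° (S° h) = h) {a : H} {ι : Type} (r : Repr K a ι) :
    ∑ i ∈ r.index, r.right i * S° (r.left i) = algebraMap K H (counit (R := K) a) := by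
  have h := congrArg S° (sum_mul_antipode_eq_algebraMap_counit (R := K) r)
  rw [map_sum, S_algebraMap] at h
  calc ∑ i ∈ r.index, r.right i * S° (r.left i)
      = ∑ i ∈ r.index, S° (r.left i * S° (r.right i)) :=
        Finset.sum_congr rfl fun i _ => by rw [S_mul, hS2]
    _ = algebraMap K H (counit (R := K) a) := h

end S2

section Integral

variable {Λ : H}

theorem E1L (hΛ : ∀ h : H, h * Λ = counit (R := K) h • Λ) (h : H) :
    comul (R := K) h * comul (R := K) Λ = counit (R := K) h • comul (R := K) Λ := by
  rw [← Bialgebra.comul_mul, hΛ h, map_smul]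

theorem E1R (hΛ' : ∀ h : H, Λ * h = counit (R := K) h • Λ) (h : H) :
    comul (R := K) Λ * comul (R := K) h = counit (R := K) h • comul (R := K) Λ := by
  rw [← Bialgebra.comul_mul, hΛ' h, map_smul]

theorem tmul_expand_left (s x y : H) :
    (x ⊗ₜ[K] (s * y)) = ((1:H) ⊗ₜ[K] s) * (x ⊗ₜ[K] y) := by
  rw [Algebra.TensorProduct.tmul_mul_tmul, one_mul]

theorem tmul_expand_right (s x y : H) :
    (x ⊗ₜ[K] (y * s)) = (x ⊗ₜ[K] y) * ((1:H) ⊗ₜ[K] s) := by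
  rw [Algebra.TensorProduct.tmul_mul_tmul, mul_one]

/-- Move (A): `(a ⊗ 1) Δ(Λ) = (1 ⊗ S a) Δ(Λ)` for a left integral `Λ`. -/
theorem moveA (hS2 : ∀ h : H, S° (S° h) = h)
    (hΛ : ∀ h : H, h * Λ = counit (R := K) h • Λ) (a : H) :
    (a ⊗ₜ[K] (1:H)) * comul (R := K) Λ = ((1:H) ⊗ₜ[K] S° a) * comul (R := K) Λ := by
  classical
  set D := comul (R := K) Λ with hD
  set r := ℛ K a with hr
  let rL := fun i => ℛ K (r.left i)
  let rR := fun i => ℛ K (r.right i)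
  have key := Coalgebra.sum_tmul_tmul_eq (R := K) r rL rR
  apply_fun ((LinearMap.mulRight K D) ∘ₗ lTensor H
    (mul' K H ∘ₗ rTensor H S° ∘ₗ (TensorProduct.comm K H H).toLinearMap) : _ →ₗ[K] _) at key
  simp only [map_sum, LinearMap.comp_apply, lTensor_tmul, LinearEquiv.coe_coe,
    TensorProduct.comm_tmul, rTensor_tmul, mul'_apply, LinearMap.mulRight_apply] at key
  have lhs : ∑ i ∈ r.index, ∑ j ∈ (rL i).index,
      ((rL i).left j ⊗ₜ[K] (S° (r.right i) * (rL i).right j)) * D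
      = ((1:H) ⊗ₜ[K] S° a) * D := by
    calc ∑ i ∈ r.index, ∑ j ∈ (rL i).index,
        ((rL i).left j ⊗ₜ[K] (S° (r.right i) * (rL i).right j)) * D
        = ∑ i ∈ r.index, ((1:H) ⊗ₜ[K] S° (r.right i)) * (comul (R := K) (r.left i) * D) := by
          refine Finset.sum_congr rfl fun i _ => ?_
          rw [← (rL i).eq, Finset.sum_mul, Finset.mul_sum]
          refine Finset.sum_congr rfl fun j _ => ?_
          rw [tmul_expand_left, mul_assoc]
      _ = ∑ i ∈ r.index, counit (R := K) (r.left i) •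
            (((1:H) ⊗ₜ[K] S° (r.right i)) * D) := by
          refine Finset.sum_congr rfl fun i _ => ?_
          rw [E1L hΛ, mul_smul_comm]
      _ = ((1:H) ⊗ₜ[K] S° a) * D := by
          rw [Finset.sum_congr rfl fun i _ => (smul_mul_assoc _ _ _).symm, ← Finset.sum_mul]
          congr 1
          simp only [← TensorProduct.tmul_smul, ← TensorProduct.tmul_sum, ← map_smul, ← map_sum]
          rw [repr_sum_counit_left r]
  have rhs : ∑ i ∈ r.index, ∑ j ∈ (rR i).index,
      (r.left i ⊗ₜ[K] (S° ((rR i).right j) * (rR i).left j)) * D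
      = (a ⊗ₜ[K] (1:H)) * D := by
    calc ∑ i ∈ r.index, ∑ j ∈ (rR i).index,
        (r.left i ⊗ₜ[K] (S° ((rR i).right j) * (rR i).left j)) * D
        = ∑ i ∈ r.index, counit (R := K) (r.right i) • ((r.left i ⊗ₜ[K] (1:H)) * D) := by
          refine Finset.sum_congr rfl fun i _ => ?_
          rw [← Finset.sum_mul, ← TensorProduct.tmul_sum, H1a hS2 (rR i),
            Algebra.algebraMap_eq_smul_one, TensorProduct.tmul_smul, smul_mul_assoc]
      _ = (a ⊗ₜ[K] (1:H)) * D := by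
          rw [Finset.sum_congr rfl fun i _ => (smul_mul_assoc _ _ _).symm, ← Finset.sum_mul]
          congr 1
          simp only [TensorProduct.smul_tmul', ← TensorProduct.sum_tmul]
          rw [repr_sum_counit_right r]
  rw [lhs, rhs] at key
  exact key.symm

/-- Move (B): `Δ(Λ) (a ⊗ 1) = Δ(Λ) (1 ⊗ S a)` for a right integral `Λ`. -/
theorem moveB (hΛ' : ∀ h : H, Λ * h = counit (R := K) h • Λ) (a : H) :
    comul (R := K) Λ * (a ⊗ₜ[K] (1:H)) = comul (R := K) Λ * ((1:H) ⊗ₜ[K] S° a) := by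
  classical
  set D := comul (R := K) Λ with hD
  set r := ℛ K a with hr
  let rL := fun i => ℛ K (r.left i)
  let rR := fun i => ℛ K (r.right i)
  have key := Coalgebra.sum_tmul_tmul_eq (R := K) r rL rR
  apply_fun ((LinearMap.mulLeft K D) ∘ₗ lTensor H
    (mul' K H ∘ₗ lTensor H S°) : _ →ₗ[K] _) at key
  simp only [map_sum, LinearMap.comp_apply, lTensor_tmul, mul'_apply,
    LinearMap.mulLeft_apply] at key
  -- key LHS: ∑ i ∑ j, D * ((rL i).left j ⊗ₜ ((rL i).right j * S°(r.right i)))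
  -- key RHS: ∑ i ∑ j, D * (r.left i ⊗ₜ ((rR i).left j * S°((rR i).right j)))
  have lhs : ∑ i ∈ r.index, ∑ j ∈ (rL i).index,
      D * ((rL i).left j ⊗ₜ[K] ((rL i).right j * S° (r.right i)))
      = D * ((1:H) ⊗ₜ[K] S° a) := by
    calc ∑ i ∈ r.index, ∑ j ∈ (rL i).index,
        D * ((rL i).left j ⊗ₜ[K] ((rL i).right j * S° (r.right i)))
        = ∑ i ∈ r.index, (D * comul (R := K) (r.left i)) * ((1:H) ⊗ₜ[K] S° (r.right i)) := by
          refine Finset.sum_congr rfl fun i _ => ?_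
          rw [← (rL i).eq, Finset.mul_sum, Finset.sum_mul]
          refine Finset.sum_congr rfl fun j _ => ?_
          rw [tmul_expand_right, ← mul_assoc]
      _ = ∑ i ∈ r.index, counit (R := K) (r.left i) •
            (D * ((1:H) ⊗ₜ[K] S° (r.right i))) := by
          refine Finset.sum_congr rfl fun i _ => ?_
          rw [E1R hΛ', smul_mul_assoc]
      _ = D * ((1:H) ⊗ₜ[K] S° a) := by
          rw [Finset.sum_congr rfl fun i _ => (mul_smul_comm _ _ _).symm, ← Finset.mul_sum]
          congr 1
          simp only [← TensorProduct.tmul_smul, ← TensorProduct.tmul_sum, ← map_smul, ← map_sum]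
          rw [repr_sum_counit_left r]
  have rhs : ∑ i ∈ r.index, ∑ j ∈ (rR i).index,
      D * (r.left i ⊗ₜ[K] ((rR i).left j * S° ((rR i).right j)))
      = D * (a ⊗ₜ[K] (1:H)) := by
    calc ∑ i ∈ r.index, ∑ j ∈ (rR i).index,
        D * (r.left i ⊗ₜ[K] ((rR i).left j * S° ((rR i).right j)))
        = ∑ i ∈ r.index, counit (R := K) (r.right i) • (D * (r.left i ⊗ₜ[K] (1:H))) := by
          refine Finset.sum_congr rfl fun i _ => ?_
          rw [← Finset.mul_sum, ← TensorProduct.tmul_sum, sum_mul_antipode_eq_algebraMap_counit (rR i),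
            Algebra.algebraMap_eq_smul_one, TensorProduct.tmul_smul, mul_smul_comm]
      _ = D * (a ⊗ₜ[K] (1:H)) := by
          rw [Finset.sum_congr rfl fun i _ => (mul_smul_comm _ _ _).symm, ← Finset.mul_sum]
          congr 1
          simp only [TensorProduct.smul_tmul', ← TensorProduct.sum_tmul]
          rw [repr_sum_counit_right r]
  rw [lhs, rhs] at key
  exact key.symm

end Integral


section QT

variable {R : H ⊗[K] H}

theorem unit_cancel_left (hU : IsUnit R) {X : H ⊗[K] H} (h : R = X * R) : X = 1 := by
  obtain ⟨v, hv⟩ := hU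
  calc X = X * (v * ↑v⁻¹) := by rw [Units.mul_inv, mul_one]
    _ = (X * R) * ↑v⁻¹ := by rw [hv, mul_assoc]
    _ = v * ↑v⁻¹ := by rw [← h, ← hv]
    _ = 1 := Units.mul_inv v

theorem unit_cancel_right (hU : IsUnit R) {X : H ⊗[K] H} (h : R = R * X) : X = 1 := by
  obtain ⟨v, hv⟩ := hU
  calc X = (↑v⁻¹ * v) * X := by rw [Units.inv_mul, one_mul]
    _ = ↑v⁻¹ * (R * X) := by rw [hv, mul_assoc]
    _ = ↑v⁻¹ * v := by rw [← h, ← hv]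
    _ = 1 := Units.inv_mul v

theorem inverse_unique {a b : H ⊗[K] H} (ha : a * R = 1) (hb : R * b = 1) : a = b := by
  calc a = a * (R * b) := by rw [hb, mul_one]
    _ = (a * R) * b := by rw [mul_assoc]
    _ = b := by rw [ha, one_mul]

theorem psi4_comul (t : H ⊗[K] H) :
    (TensorProduct.lid K (H ⊗[K] H)) (rTensor (H ⊗[K] H) (counit (R := K))
      ((TensorProduct.assoc K H H H) (rTensor H (comul (R := K)) t))) = t := by
  induction t using TensorProduct.induction_on with
  | zero => simp
  | add x y hx hy => simp only [map_add, hx, hy]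
  | tmul x y =>
    classical
    set rx := ℛ K x
    rw [rTensor_tmul, ← rx.eq, TensorProduct.sum_tmul]
    simp only [map_sum, TensorProduct.assoc_tmul, rTensor_tmul, TensorProduct.lid_tmul]
    calc ∑ i ∈ rx.index, counit (R := K) (rx.left i) • (rx.right i ⊗ₜ[K] y)
        = (∑ i ∈ rx.index, counit (R := K) (rx.left i) • rx.right i) ⊗ₜ[K] y := by
          simp only [TensorProduct.smul_tmul', ← TensorProduct.sum_tmul]
      _ = x ⊗ₜ[K] y := by rw [repr_sum_counit_left rx]

theorem psi4_r13r23 (P Q : H ⊗[K] H) :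
    (TensorProduct.lid K (H ⊗[K] H)) (rTensor (H ⊗[K] H) (counit (R := K))
      (r13 K H P * r23 K H Q)) =
    ((1:H) ⊗ₜ[K] ((TensorProduct.lid K H) (rTensor H (counit (R := K)) P))) * Q := by
  induction P using TensorProduct.induction_on with
  | zero => simp [r13, r23]
  | add x y hx hy =>
    have : r13 K H (x + y) = r13 K H x + r13 K H y := by simp [r13]
    simp only [this, add_mul, map_add, hx, hy, TensorProduct.tmul_add]
  | tmul a b =>
    induction Q using TensorProduct.induction_on with
    | zero => simp [r13, r23]
    | add x y hx hy =>
      have : r23 K H (x + y) = r23 K H x + r23 K H y := TensorProduct.tmul_add _ x y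
      simp only [this, mul_add, map_add, hx, hy]
    | tmul c d =>
      simp only [r13, r23, TensorProduct.map_tmul, LinearMap.id_coe, id_eq,
        TensorProduct.mk_apply, Algebra.TensorProduct.tmul_mul_tmul, one_mul, mul_one,
        rTensor_tmul, TensorProduct.lid_tmul]
      simp only [smul_mul_assoc, TensorProduct.tmul_smul]

theorem psi3_comul (t : H ⊗[K] H) :
    (rTensor H (mul' K H ∘ₗ rTensor H S°)) (rTensor H (comul (R := K)) t) =
    (1:H) ⊗ₜ[K] ((TensorProduct.lid K H) (rTensor H (counit (R := K)) t)) := by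
  induction t using TensorProduct.induction_on with
  | zero => simp
  | add x y hx hy => simp only [map_add, hx, hy, TensorProduct.tmul_add]
  | tmul x y =>
    simp only [rTensor_tmul, LinearMap.comp_apply, mul_antipode_rTensor_comul_apply,
      TensorProduct.lid_tmul, Algebra.algebraMap_eq_smul_one, TensorProduct.smul_tmul]

theorem psi3_r13r23 (P Q : H ⊗[K] H) :
    (rTensor H (mul' K H ∘ₗ rTensor H S°))
      ((TensorProduct.assoc K H H H).symm (r13 K H P * r23 K H Q)) =
    (rTensor H S° P) * Q := by
  induction P using TensorProduct.induction_on with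
  | zero => simp [r13, r23]
  | add x y hx hy =>
    have : r13 K H (x + y) = r13 K H x + r13 K H y := by simp [r13]
    rw [this, add_mul, map_add, map_add, hx, hy, map_add, add_mul]
  | tmul a b =>
    induction Q using TensorProduct.induction_on with
    | zero => simp [r13, r23]
    | add x y hx hy =>
      have : r23 K H (x + y) = r23 K H x + r23 K H y := TensorProduct.tmul_add _ x y
      simp only [this, mul_add, map_add, hx, hy]
    | tmul c d =>
      simp only [r13, r23, TensorProduct.map_tmul, LinearMap.id_coe, id_eq,
        TensorProduct.mk_apply, Algebra.TensorProduct.tmul_mul_tmul, one_mul, mul_one,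
        TensorProduct.assoc_symm_tmul, rTensor_tmul, LinearMap.comp_apply, mul'_apply]

theorem Q1 (hU : IsUnit R)
    (hA1 : (TensorProduct.assoc K H H H) ((rTensor H (comul (R := K))) R) =
      r13 K H R * r23 K H R) :
    (rTensor H S° R) * R = 1 := by
  have e1 := congrArg (fun w => (TensorProduct.lid K (H ⊗[K] H))
    (rTensor (H ⊗[K] H) (counit (R := K)) w)) hA1
  rw [psi4_comul R, psi4_r13r23 R R] at e1
  have hz : ((1:H) ⊗ₜ[K] ((TensorProduct.lid K H) (rTensor H (counit (R := K)) R))) = 1 :=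
    unit_cancel_left hU e1
  have e2 := congrArg (fun w => (rTensor H (mul' K H ∘ₗ rTensor H S°))
    ((TensorProduct.assoc K H H H).symm w)) hA1
  simp only [LinearEquiv.symm_apply_apply] at e2
  rw [psi3_r13r23 R R, psi3_comul R] at e2
  rw [← e2, hz]

theorem Q2 (hS2 : ∀ h : H, S° (S° h) = h) (hU : IsUnit R)
    (hA2 : (lTensor H (comul (R := K))) R = r13 K H R * r12 K H R) :
    R * (lTensor H S° R) = 1 := by
  classical
  have psi7_comul : ∀ t : H ⊗[K] H,
      lTensor H ((TensorProduct.lid K H).toLinearMap ∘ₗ rTensor H (counit (R := K)))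
        (lTensor H (comul (R := K)) t) = t := by
    intro t
    induction t using TensorProduct.induction_on with
    | zero => simp
    | add x y hx hy => simp only [map_add, hx, hy]
    | tmul x y =>
      rw [lTensor_tmul, lTensor_tmul, LinearMap.comp_apply, rTensor_counit_comul]
      simp
  have psi7_r13r12 : ∀ P Q : H ⊗[K] H,
      lTensor H ((TensorProduct.lid K H).toLinearMap ∘ₗ rTensor H (counit (R := K)))
        (r13 K H P * r12 K H Q) =
      P * (((TensorProduct.rid K H) (lTensor H (counit (R := K)) Q)) ⊗ₜ[K] (1:H)) := by
    intro P Q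
    induction P using TensorProduct.induction_on with
    | zero => simp [r13, r12]
    | add x y hx hy =>
      have : r13 K H (x + y) = r13 K H x + r13 K H y := by simp [r13]
      simp only [this, add_mul, map_add, hx, hy]
    | tmul a b =>
      induction Q using TensorProduct.induction_on with
      | zero => simp [r13, r12]
      | add x y hx hy =>
        have : r12 K H (x + y) = r12 K H x + r12 K H y := by simp [r12]
        simp only [this, mul_add, map_add, hx, hy, TensorProduct.add_tmul]
      | tmul c d =>
        simp only [r13, r12, TensorProduct.map_tmul, LinearMap.id_coe, id_eq,
          TensorProduct.mk_apply, LinearMap.flip_apply,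
          Algebra.TensorProduct.tmul_mul_tmul, one_mul, mul_one,
          lTensor_tmul, LinearMap.comp_apply, rTensor_tmul, LinearEquiv.coe_coe,
          TensorProduct.lid_tmul, TensorProduct.rid_tmul]
        simp only [mul_smul_comm, smul_mul_assoc, TensorProduct.smul_tmul',
          TensorProduct.tmul_smul]
  have psi6_comul : ∀ t : H ⊗[K] H,
      lTensor H (mul' K H ∘ₗ lTensor H S° ∘ₗ (TensorProduct.comm K H H).toLinearMap)
        (lTensor H (comul (R := K)) t) =
      ((TensorProduct.rid K H) (lTensor H (counit (R := K)) t)) ⊗ₜ[K] (1:H) := by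
    intro t
    induction t using TensorProduct.induction_on with
    | zero => simp
    | add x y hx hy => simp only [map_add, hx, hy, TensorProduct.add_tmul]
    | tmul x y =>
      classical
      set ry := ℛ K y
      have hg : (mul' K H ∘ₗ lTensor H S° ∘ₗ (TensorProduct.comm K H H).toLinearMap)
          (comul (R := K) y) = algebraMap K H (counit (R := K) y) := by
        rw [← ry.eq]
        simp only [map_sum, LinearMap.comp_apply, LinearEquiv.coe_coe,
          TensorProduct.comm_tmul, lTensor_tmul, mul'_apply]
        exact H1b hS2 ry
      rw [lTensor_tmul, lTensor_tmul, hg, lTensor_tmul, TensorProduct.rid_tmul,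
        Algebra.algebraMap_eq_smul_one, TensorProduct.tmul_smul, TensorProduct.smul_tmul']
  have psi6_r13r12 : ∀ P Q : H ⊗[K] H,
      lTensor H (mul' K H ∘ₗ lTensor H S° ∘ₗ (TensorProduct.comm K H H).toLinearMap)
        (r13 K H P * r12 K H Q) = P * (lTensor H S° Q) := by
    intro P Q
    induction P using TensorProduct.induction_on with
    | zero => simp [r13, r12]
    | add x y hx hy =>
      have : r13 K H (x + y) = r13 K H x + r13 K H y := by simp [r13]
      simp only [this, add_mul, map_add, hx, hy]
    | tmul a b =>
      induction Q using TensorProduct.induction_on with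
      | zero => simp [r13, r12]
      | add x y hx hy =>
        have : r12 K H (x + y) = r12 K H x + r12 K H y := by simp [r12]
        simp only [this, mul_add, map_add, hx, hy]
      | tmul c d =>
        simp only [r13, r12, TensorProduct.map_tmul, LinearMap.id_coe, id_eq,
          TensorProduct.mk_apply, LinearMap.flip_apply,
          Algebra.TensorProduct.tmul_mul_tmul, one_mul, mul_one,
          lTensor_tmul, LinearMap.comp_apply, LinearEquiv.coe_coe,
          TensorProduct.comm_tmul, mul'_apply]
  have e1 := congrArg (lTensor H
    ((TensorProduct.lid K H).toLinearMap ∘ₗ rTensor H (counit (R := K)))) hA2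
  rw [psi7_comul R, psi7_r13r12 R R] at e1
  have hz : (((TensorProduct.rid K H) (lTensor H (counit (R := K)) R)) ⊗ₜ[K] (1:H)) = 1 :=
    unit_cancel_right hU e1
  have e2 := congrArg (lTensor H
    (mul' K H ∘ₗ lTensor H S° ∘ₗ (TensorProduct.comm K H H).toLinearMap)) hA2
  rw [psi6_comul R, psi6_r13r12 R R] at e2
  rw [← e2, hz]

theorem Q3 (hS2 : ∀ h : H, S° (S° h) = h) (hU : IsUnit R)
    (hA1 : (TensorProduct.assoc K H H H) ((rTensor H (comul (R := K))) R) =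
      r13 K H R * r23 K H R)
    (hA2 : (lTensor H (comul (R := K))) R = r13 K H R * r12 K H R) :
    rTensor H S° R = lTensor H S° R :=
  inverse_unique (Q1 hU hA1) (Q2 hS2 hU hA2)

theorem mapSS_mul (X Y : H ⊗[K] H) :
    TensorProduct.map S° S° (X * Y) =
      TensorProduct.map S° S° Y * TensorProduct.map S° S° X := by
  induction X using TensorProduct.induction_on with
  | zero => simp
  | add x y hx hy => simp only [add_mul, map_add, hx, hy, mul_add]
  | tmul a b =>
    induction Y using TensorProduct.induction_on with
    | zero => simp
    | add x y hx hy => simp only [mul_add, map_add, hx, hy, add_mul]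
    | tmul c d =>
      simp only [Algebra.TensorProduct.tmul_mul_tmul, TensorProduct.map_tmul, S_mul]

theorem mapSS_one : TensorProduct.map S° S° (1 : H ⊗[K] H) = 1 := by
  rw [Algebra.TensorProduct.one_def, TensorProduct.map_tmul, S_one]

theorem mapSS_lTensor (hS2 : ∀ h : H, S° (S° h) = h) (X : H ⊗[K] H) :
    TensorProduct.map S° S° (lTensor H S° X) = rTensor H S° X := by
  induction X using TensorProduct.induction_on with
  | zero => simp
  | add x y hx hy => simp only [map_add, hx, hy]
  | tmul a b => simp only [lTensor_tmul, TensorProduct.map_tmul, rTensor_tmul, hS2]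

theorem Q5 (hS2 : ∀ h : H, S° (S° h) = h) (hU : IsUnit R)
    (hA1 : (TensorProduct.assoc K H H H) ((rTensor H (comul (R := K))) R) =
      r13 K H R * r23 K H R)
    (hA2 : (lTensor H (comul (R := K))) R = r13 K H R * r12 K H R) :
    TensorProduct.map S° S° R = R := by
  have h2 : R * (lTensor H S° R) = 1 := Q2 hS2 hU hA2
  have h4 : R * (rTensor H S° R) = 1 := by rw [Q3 hS2 hU hA1 hA2]; exact h2
  have e := congrArg (TensorProduct.map S° S°) h2
  rw [mapSS_mul, mapSS_one, mapSS_lTensor hS2] at e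
  calc TensorProduct.map S° S° R
      = (R * rTensor H S° R) * TensorProduct.map S° S° R := by rw [h4, one_mul]
    _ = R * ((rTensor H S° R) * TensorProduct.map S° S° R) := by rw [mul_assoc]
    _ = R := by rw [e, mul_one]

end QT

section Drinfeld

variable {R : H ⊗[K] H}

theorem comm_mul (X Y : H ⊗[K] H) :
    (TensorProduct.comm K H H) (X * Y) =
      (TensorProduct.comm K H H) X * (TensorProduct.comm K H H) Y := by
  induction X using TensorProduct.induction_on with
  | zero => simp
  | add x y hx hy => simp only [add_mul, map_add, hx, hy]
  | tmul a b =>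
    induction Y using TensorProduct.induction_on with
    | zero => simp
    | add x y hx hy => simp only [mul_add, map_add, hx, hy]
    | tmul c d =>
      simp only [Algebra.TensorProduct.tmul_mul_tmul, TensorProduct.comm_tmul]

theorem Su_eq (hS2 : ∀ h : H, S° (S° h) = h) (X : H ⊗[K] H) :
    S° (mul' K H ((TensorProduct.comm K H H) (lTensor H S° X))) =
      mul' K H (rTensor H S° X) := by
  induction X using TensorProduct.induction_on with
  | zero => simp
  | add x y hx hy => simp only [map_add, hx, hy]
  | tmul a b =>
    simp only [lTensor_tmul, TensorProduct.comm_tmul, mul'_apply, rTensor_tmul]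
    rw [S_mul, hS2]

theorem E0a (h : H) {ι : Type} (r : Repr K h ι) (Y : H ⊗[K] H) :
    mul' K H ((TensorProduct.comm K H H) (lTensor H S° (Y * comul (R := K) h))) =
    ∑ i ∈ r.index, S° (r.right i) *
      ((mul' K H ((TensorProduct.comm K H H) (lTensor H S° Y))) * r.left i) := by
  induction Y using TensorProduct.induction_on with
  | zero => simp
  | add x y hx hy =>
    simp only [add_mul, map_add, hx, hy, mul_add, add_mul, ← Finset.sum_add_distrib]
  | tmul a b =>
    rw [← r.eq, Finset.mul_sum]
    simp only [map_sum, Algebra.TensorProduct.tmul_mul_tmul, lTensor_tmul,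
      TensorProduct.comm_tmul, mul'_apply]
    refine Finset.sum_congr rfl fun i _ => ?_
    rw [S_mul, mul_assoc, mul_assoc]

theorem E0b (h : H) {ι : Type} (r : Repr K h ι) (Y : H ⊗[K] H) :
    mul' K H ((TensorProduct.comm K H H)
      (lTensor H S° ((TensorProduct.comm K H H) (comul (R := K) h) * Y))) =
    counit (R := K) h • mul' K H ((TensorProduct.comm K H H) (lTensor H S° Y)) := by
  induction Y using TensorProduct.induction_on with
  | zero => simp
  | add x y hx hy => simp only [mul_add, map_add, hx, hy, smul_add]
  | tmul a b =>
    rw [← r.eq]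
    simp only [map_sum, TensorProduct.comm_tmul, Finset.sum_mul,
      Algebra.TensorProduct.tmul_mul_tmul, lTensor_tmul, mul'_apply]
    calc ∑ i ∈ r.index, S° (r.left i * b) * (r.right i * a)
        = ∑ i ∈ r.index, S° b * ((S° (r.left i) * r.right i) * a) := by
          refine Finset.sum_congr rfl fun i _ => ?_
          rw [S_mul, mul_assoc, mul_assoc]
      _ = S° b * (algebraMap K H (counit (R := K) h) * a) := by
          rw [← Finset.mul_sum, ← Finset.sum_mul, sum_antipode_mul_eq_algebraMap_counit r]
      _ = counit (R := K) h • (S° b * a) := by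
          rw [← Algebra.smul_def, mul_smul_comm]

theorem Elem (hint : ∀ h' : H, R * comul (R := K) h' =
      (TensorProduct.comm K H H) (comul (R := K) h') * R)
    {u : H} (hu : u = mul' K H ((TensorProduct.comm K H H) (lTensor H S° R)))
    (h : H) {ι : Type} (r : Repr K h ι) :
    ∑ i ∈ r.index, S° (r.right i) * (u * r.left i) = counit (R := K) h • u := by
  have e := congrArg (fun w => mul' K H ((TensorProduct.comm K H H) (lTensor H S° w)))
    (hint h)
  rw [E0a h r R, E0b h r R] at e
  rw [hu]
  exact e

theorem uCentral (hS2 : ∀ h : H, S° (S° h) = h)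
    (hint : ∀ h' : H, R * comul (R := K) h' =
      (TensorProduct.comm K H H) (comul (R := K) h') * R)
    {u : H} (hu : u = mul' K H ((TensorProduct.comm K H H) (lTensor H S° R)))
    (x : H) : u * x = x * u := by
  classical
  set r := ℛ K x
  let p := fun i => ℛ K (r.left i)
  let q := fun i => ℛ K (r.right i)
  have key := Coalgebra.sum_tmul_tmul_eq (R := K) r p q
  apply_fun (mul' K H ∘ₗ (TensorProduct.comm K H H).toLinearMap ∘ₗ lTensor H
    ((LinearMap.mulRight K u) ∘ₗ mul' K H ∘ₗ (TensorProduct.comm K H H).toLinearMap ∘ₗ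
      rTensor H S°) : _ →ₗ[K] _) at key
  simp only [map_sum, LinearMap.comp_apply, lTensor_tmul, LinearEquiv.coe_coe,
    TensorProduct.comm_tmul, rTensor_tmul, mul'_apply, LinearMap.mulRight_apply] at key
  -- key LHS: ∑ i ∑ j, ((r.right i * S°((p i).right j)) * u) * (p i).left j
  -- key RHS: ∑ i ∑ j, (((q i).right j * S°((q i).left j)) * u) * r.left i
  have lhs : ∑ i ∈ r.index, ∑ j ∈ (p i).index,
      ((r.right i * S° ((p i).right j)) * u) * (p i).left j = x * u := by
    calc ∑ i ∈ r.index, ∑ j ∈ (p i).index,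
        ((r.right i * S° ((p i).right j)) * u) * (p i).left j
        = ∑ i ∈ r.index, r.right i * ∑ j ∈ (p i).index,
            S° ((p i).right j) * (u * (p i).left j) := by
          refine Finset.sum_congr rfl fun i _ => ?_
          rw [Finset.mul_sum]
          refine Finset.sum_congr rfl fun j _ => ?_
          rw [mul_assoc, mul_assoc]
      _ = ∑ i ∈ r.index, counit (R := K) (r.left i) • (r.right i * u) := by
          refine Finset.sum_congr rfl fun i _ => ?_
          rw [Elem hint hu (r.left i) (p i), mul_smul_comm]
      _ = x * u := by
          rw [Finset.sum_congr rfl fun i _ => (smul_mul_assoc _ _ _).symm, ← Finset.sum_mul,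
            repr_sum_counit_left r]
  have rhs : ∑ i ∈ r.index, ∑ j ∈ (q i).index,
      (((q i).right j * S° ((q i).left j)) * u) * r.left i = u * x := by
    calc ∑ i ∈ r.index, ∑ j ∈ (q i).index,
        (((q i).right j * S° ((q i).left j)) * u) * r.left i
        = ∑ i ∈ r.index, counit (R := K) (r.right i) • (u * r.left i) := by
          refine Finset.sum_congr rfl fun i _ => ?_
          rw [← Finset.sum_mul, ← Finset.sum_mul, H1b hS2 (q i), ← Algebra.smul_def,
            smul_mul_assoc]
      _ = u * x := by
          rw [Finset.sum_congr rfl fun i _ => (mul_smul_comm _ _ _).symm, ← Finset.mul_sum,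
            repr_sum_counit_right r]
  rw [lhs, rhs] at key
  exact key.symm

theorem SuCentral (hS2 : ∀ h : H, S° (S° h) = h) {u : H}
    (hcen : ∀ x, u * x = x * u) (x : H) : S° u * x = x * S° u := by
  calc S° u * x = S° u * S° (S° x) := by rw [hS2]
    _ = S° (S° x * u) := (S_mul _ _).symm
    _ = S° (u * S° x) := by rw [hcen]
    _ = S° (S° x) * S° u := S_mul _ _
    _ = x * S° u := by rw [hS2]

end Drinfeld

section Assembly

variable {Λ : H}

theorem moveA' (hS2 : ∀ h : H, S° (S° h) = h)
    (hΛ : ∀ h : H, h * Λ = counit (R := K) h • Λ) (a : H) :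
    (a ⊗ₜ[K] (1:H)) * (TensorProduct.comm K H H) (comul (R := K) Λ) =
    ((1:H) ⊗ₜ[K] S° a) * (TensorProduct.comm K H H) (comul (R := K) Λ) := by
  have h := moveA hS2 hΛ (S° a)
  rw [hS2] at h
  have e := congrArg (TensorProduct.comm K H H) h
  rw [comm_mul, comm_mul, TensorProduct.comm_tmul, TensorProduct.comm_tmul] at e
  exact e.symm

theorem moveB' (hS2 : ∀ h : H, S° (S° h) = h)
    (hΛ' : ∀ h : H, Λ * h = counit (R := K) h • Λ) (a : H) :
    (TensorProduct.comm K H H) (comul (R := K) Λ) * (a ⊗ₜ[K] (1:H)) =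
    (TensorProduct.comm K H H) (comul (R := K) Λ) * ((1:H) ⊗ₜ[K] S° a) := by
  have h := moveB hΛ' (S° a)
  rw [hS2] at h
  have e := congrArg (TensorProduct.comm K H H) h
  rw [comm_mul, comm_mul, TensorProduct.comm_tmul, TensorProduct.comm_tmul] at e
  exact e.symm

theorem starA (hS2 : ∀ h : H, S° (S° h) = h)
    (hΛ : ∀ h : H, h * Λ = counit (R := K) h • Λ) (Y : H ⊗[K] H) :
    Y * comul (R := K) Λ =
    ((1:H) ⊗ₜ[K] (mul' K H ((TensorProduct.comm K H H) (rTensor H S° Y)))) *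
      comul (R := K) Λ := by
  induction Y using TensorProduct.induction_on with
  | zero => simp
  | add x y hx hy =>
    rw [add_mul, hx, hy]
    simp only [map_add, TensorProduct.tmul_add, add_mul]
  | tmul a b =>
    have h1 : (a ⊗ₜ[K] b) = ((1:H) ⊗ₜ[K] b) * (a ⊗ₜ[K] (1:H)) := by
      rw [Algebra.TensorProduct.tmul_mul_tmul, one_mul, mul_one]
    conv_lhs => rw [h1]
    rw [mul_assoc, moveA hS2 hΛ a, ← mul_assoc, Algebra.TensorProduct.tmul_mul_tmul,
      one_mul]
    simp only [rTensor_tmul, TensorProduct.comm_tmul, mul'_apply]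

theorem starB (hS2 : ∀ h : H, S° (S° h) = h)
    (hΛ' : ∀ h : H, Λ * h = counit (R := K) h • Λ) (Y : H ⊗[K] H) :
    (TensorProduct.comm K H H) (comul (R := K) Λ) * Y =
    (TensorProduct.comm K H H) (comul (R := K) Λ) *
      ((1:H) ⊗ₜ[K] (mul' K H (rTensor H S° Y))) := by
  induction Y using TensorProduct.induction_on with
  | zero => simp
  | add x y hx hy =>
    rw [mul_add, hx, hy]
    simp only [map_add, TensorProduct.tmul_add, mul_add]
  | tmul a b =>
    have h1 : (a ⊗ₜ[K] b) = (a ⊗ₜ[K] (1:H)) * ((1:H) ⊗ₜ[K] b) := by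
      rw [Algebra.TensorProduct.tmul_mul_tmul, one_mul, mul_one]
    conv_lhs => rw [h1]
    rw [← mul_assoc, moveB' hS2 hΛ', mul_assoc, Algebra.TensorProduct.tmul_mul_tmul,
      one_mul]
    simp only [rTensor_tmul, mul'_apply]

theorem central_swap {u : H} (hcen : ∀ x, u * x = x * u) (W : H ⊗[K] H) :
    W * ((1:H) ⊗ₜ[K] u) = ((1:H) ⊗ₜ[K] u) * W := by
  induction W using TensorProduct.induction_on with
  | zero => simp
  | add x y hx hy => rw [add_mul, mul_add, hx, hy]
  | tmul p q =>
    rw [Algebra.TensorProduct.tmul_mul_tmul, Algebra.TensorProduct.tmul_mul_tmul,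
      one_mul, mul_one, hcen q]

theorem adMap_apply_repr (x a : H) {ι : Type} (rx : Repr K x ι) :
    adMap K H (x ⊗ₜ[K] a) = ∑ j ∈ rx.index, rx.left j * (a * S° (rx.right j)) := by
  rw [adMap]
  simp only [LinearMap.comp_apply, rTensor_tmul]
  rw [← rx.eq, TensorProduct.sum_tmul]
  simp only [map_sum, TensorProduct.assoc_tmul, lTensor_tmul, LinearMap.comp_apply,
    LinearEquiv.coe_coe, TensorProduct.comm_tmul, mul'_apply]

theorem M1 (Λ : H) (R : H ⊗[K] H) :
    deltaR K H R Λ =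
    mul' K (H ⊗[K] H) (TensorProduct.map
      ((LinearMap.mulRight K (comul (R := K) Λ)) ∘ₗ TensorProduct.mk K H H 1)
      (TensorProduct.map S° S° ∘ₗ (TensorProduct.comm K H H).toLinearMap)
      ((TensorProduct.assoc K H H H) (rTensor H (comul (R := K)) R))) := by
  classical
  rw [deltaR]
  simp only [LinearMap.comp_apply, LinearMap.flip_apply, TensorProduct.mk_apply,
    LinearEquiv.coe_coe]
  induction R using TensorProduct.induction_on with
  | zero => simp
  | add x y hx hy =>
    simp only [TensorProduct.tmul_add, map_add, hx, hy]
  | tmul x y =>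
    set rΛ := ℛ K Λ with hrΛ
    set rx := ℛ K x with hrx
    rw [lTensor_tmul]
    simp only [LinearEquiv.coe_coe]
    rw [TensorProduct.comm_tmul]
    conv_lhs => rw [← rΛ.eq]
    rw [TensorProduct.sum_tmul]
    simp only [map_sum, TensorProduct.tensorTensorTensorComm_tmul, TensorProduct.map_tmul,
      LinearMap.comp_apply, lTensor_tmul, mul'_apply, LinearEquiv.coe_coe,
      TensorProduct.comm_tmul]
    rw [rTensor_tmul]
    conv_rhs => rw [← rx.eq]
    rw [TensorProduct.sum_tmul]
    simp only [map_sum, TensorProduct.assoc_tmul, TensorProduct.map_tmul,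
      LinearMap.comp_apply, TensorProduct.mk_apply, LinearMap.mulRight_apply,
      LinearEquiv.coe_coe, TensorProduct.comm_tmul, mul'_apply]
    -- LHS: ∑ k, (rΛ.left k * S° y) ⊗ₜ adMap (x ⊗ₜ rΛ.right k)
    -- RHS: ∑ j, ((1 ⊗ₜ rx.left j) * comul Λ) * (S° y ⊗ₜ S° (rx.right j))
    have lhs_eq : ∀ k ∈ rΛ.index,
        (rΛ.left k * S° y) ⊗ₜ[K] adMap K H (x ⊗ₜ[K] rΛ.right k)
        = ∑ j ∈ rx.index, (rΛ.left k * S° y) ⊗ₜ[K]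
            (rx.left j * (rΛ.right k * S° (rx.right j))) := by
      intro k _
      rw [adMap_apply_repr x (rΛ.right k) rx, TensorProduct.tmul_sum]
    have rhs_eq : ∀ j ∈ rx.index,
        ((1:H) ⊗ₜ[K] rx.left j * comul (R := K) Λ) * (S° y ⊗ₜ[K] S° (rx.right j))
        = ∑ k ∈ rΛ.index, (rΛ.left k * S° y) ⊗ₜ[K]
            (rx.left j * (rΛ.right k * S° (rx.right j))) := by
      intro j _
      rw [← rΛ.eq, Finset.mul_sum, Finset.sum_mul]
      refine Finset.sum_congr rfl fun k _ => ?_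
      rw [Algebra.TensorProduct.tmul_mul_tmul, one_mul,
        Algebra.TensorProduct.tmul_mul_tmul, mul_assoc]
    rw [Finset.sum_congr rfl lhs_eq, Finset.sum_congr rfl rhs_eq, Finset.sum_comm]

theorem M2 (hS2 : ∀ h : H, S° (S° h) = h)
    (hΛ' : ∀ h : H, Λ * h = counit (R := K) h • Λ) (P Q : H ⊗[K] H) :
    mul' K (H ⊗[K] H) (TensorProduct.map
      ((LinearMap.mulRight K (comul (R := K) Λ)) ∘ₗ TensorProduct.mk K H H 1)
      (TensorProduct.map S° S° ∘ₗ (TensorProduct.comm K H H).toLinearMap)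
      (r13 K H P * r23 K H Q)) =
    mul' K (H ⊗[K] H) (TensorProduct.map
      ((LinearMap.mulRight K (comul (R := K) Λ)) ∘ₗ TensorProduct.mk K H H 1)
      (TensorProduct.mk K H H 1) P) *
      ((1:H) ⊗ₜ[K] (mul' K H ((TensorProduct.comm K H H) (rTensor H S° Q)))) := by
  induction P using TensorProduct.induction_on with
  | zero => simp [r13]
  | add x y hx hy =>
    have : r13 K H (x + y) = r13 K H x + r13 K H y := by simp [r13]
    simp only [this, add_mul, map_add, hx, hy]
  | tmul a b =>
    induction Q using TensorProduct.induction_on with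
    | zero => simp [r23]
    | add x y hx hy =>
      have : r23 K H (x + y) = r23 K H x + r23 K H y := TensorProduct.tmul_add _ x y
      simp only [this, mul_add, map_add, hx, hy, TensorProduct.tmul_add]
    | tmul c d =>
      simp only [r13, r23, TensorProduct.map_tmul, LinearMap.id_coe, id_eq,
        TensorProduct.mk_apply, Algebra.TensorProduct.tmul_mul_tmul, one_mul, mul_one,
        LinearMap.comp_apply, LinearMap.mulRight_apply, LinearEquiv.coe_coe,
        TensorProduct.comm_tmul, rTensor_tmul, mul'_apply]
      -- LHS: ((1 ⊗ₜ a) * comul Λ) * (S°(b*d) ⊗ₜ S° c)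
      -- RHS: (((1 ⊗ₜ a) * comul Λ) * (1 ⊗ₜ b)) * (1 ⊗ₜ (d * S° c))
      have hsplit : (S° (b*d) ⊗ₜ[K] S° c) =
          (S° (b*d) ⊗ₜ[K] (1:H)) * ((1:H) ⊗ₜ[K] S° c) := by
        rw [Algebra.TensorProduct.tmul_mul_tmul, one_mul, mul_one]
      have hmv : comul (R := K) Λ * (S° (b*d) ⊗ₜ[K] (1:H)) =
          comul (R := K) Λ * ((1:H) ⊗ₜ[K] (b*d)) := by
        rw [moveB hΛ' (S° (b*d)), hS2]
      rw [hsplit, ← mul_assoc, mul_assoc ((1:H) ⊗ₜ[K] a), hmv]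
      simp only [mul_assoc, Algebra.TensorProduct.tmul_mul_tmul, one_mul]

theorem C1 {u : H}
    (star : ((1:H) ⊗ₜ[K] u) * comul (R := K) Λ =
      (TensorProduct.comm K H H) (comul (R := K) Λ) * ((1:H) ⊗ₜ[K] S° u))
    (hcen : ∀ x, u * x = x * u) (hScen : ∀ x, S° u * x = x * S° u) (P : H ⊗[K] H) :
    mul' K (H ⊗[K] H) (TensorProduct.map
      ((LinearMap.mulRight K (comul (R := K) Λ)) ∘ₗ TensorProduct.mk K H H 1)
      (TensorProduct.mk K H H 1) P) * ((1:H) ⊗ₜ[K] u) =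
    mul' K (H ⊗[K] H) (TensorProduct.map
      ((LinearMap.mulRight K ((TensorProduct.comm K H H) (comul (R := K) Λ))) ∘ₗ
        TensorProduct.mk K H H 1)
      (TensorProduct.mk K H H 1) P) * ((1:H) ⊗ₜ[K] S° u) := by
  induction P using TensorProduct.induction_on with
  | zero => simp
  | add x y hx hy => simp only [map_add, add_mul, hx, hy]
  | tmul a b =>
    simp only [TensorProduct.map_tmul, LinearMap.comp_apply, TensorProduct.mk_apply,
      LinearMap.mulRight_apply, mul'_apply]
    -- LHS: (((1 ⊗ₜ a) * D) * (1 ⊗ₜ b)) * (1 ⊗ₜ u)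
    simp only [mul_assoc]
    congr 1
    calc comul (R := K) Λ * (((1:H) ⊗ₜ[K] b) * ((1:H) ⊗ₜ[K] u))
        = comul (R := K) Λ * (((1:H) ⊗ₜ[K] u) * ((1:H) ⊗ₜ[K] b)) := by
          rw [Algebra.TensorProduct.tmul_mul_tmul, one_mul, ← hcen b,
            Algebra.TensorProduct.tmul_mul_tmul, one_mul]
      _ = (comul (R := K) Λ * ((1:H) ⊗ₜ[K] u)) * ((1:H) ⊗ₜ[K] b) := by rw [mul_assoc]
      _ = (((1:H) ⊗ₜ[K] u) * comul (R := K) Λ) * ((1:H) ⊗ₜ[K] b) := by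
          rw [central_swap hcen]
      _ = ((TensorProduct.comm K H H) (comul (R := K) Λ) * ((1:H) ⊗ₜ[K] S° u)) *
            ((1:H) ⊗ₜ[K] b) := by rw [star]
      _ = (TensorProduct.comm K H H) (comul (R := K) Λ) *
            (((1:H) ⊗ₜ[K] S° u) * ((1:H) ⊗ₜ[K] b)) := by rw [mul_assoc]
      _ = (TensorProduct.comm K H H) (comul (R := K) Λ) *
            (((1:H) ⊗ₜ[K] b) * ((1:H) ⊗ₜ[K] S° u)) := by
          rw [Algebra.TensorProduct.tmul_mul_tmul, one_mul, hScen b,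
            Algebra.TensorProduct.tmul_mul_tmul, one_mul]

theorem commX {u : H} (P : H ⊗[K] H) :
    (TensorProduct.comm K H H) (mul' K (H ⊗[K] H) (TensorProduct.map
      ((LinearMap.mulRight K (comul (R := K) Λ)) ∘ₗ TensorProduct.mk K H H 1)
      (TensorProduct.mk K H H 1) P) * ((1:H) ⊗ₜ[K] u)) =
    mul' K (H ⊗[K] H) (TensorProduct.map
      ((LinearMap.mulRight K ((TensorProduct.comm K H H) (comul (R := K) Λ))) ∘ₗ
        (TensorProduct.mk K H H).flip 1)
      ((TensorProduct.mk K H H).flip 1) P) * (u ⊗ₜ[K] (1:H)) := by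
  induction P using TensorProduct.induction_on with
  | zero => simp
  | add x y hx hy => simp only [map_add, add_mul, hx, hy]
  | tmul a b =>
    simp only [TensorProduct.map_tmul, LinearMap.comp_apply, TensorProduct.mk_apply,
      LinearMap.flip_apply, LinearMap.mulRight_apply, mul'_apply]
    rw [comm_mul, comm_mul, comm_mul, TensorProduct.comm_tmul, TensorProduct.comm_tmul,
      TensorProduct.comm_tmul]

theorem C2 (hS2 : ∀ h : H, S° (S° h) = h)
    (hΛ : ∀ h : H, h * Λ = counit (R := K) h • Λ)
    (hΛ' : ∀ h : H, Λ * h = counit (R := K) h • Λ)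
    {u : H} (hScen : ∀ x, S° u * x = x * S° u) (P : H ⊗[K] H) :
    mul' K (H ⊗[K] H) (TensorProduct.map
      ((LinearMap.mulRight K ((TensorProduct.comm K H H) (comul (R := K) Λ))) ∘ₗ
        (TensorProduct.mk K H H).flip 1)
      ((TensorProduct.mk K H H).flip 1) P) * (u ⊗ₜ[K] (1:H)) =
    mul' K (H ⊗[K] H) (TensorProduct.map
      ((LinearMap.mulRight K ((TensorProduct.comm K H H) (comul (R := K) Λ))) ∘ₗ
        TensorProduct.mk K H H 1)
      (TensorProduct.mk K H H 1) (TensorProduct.map S° S° P)) * ((1:H) ⊗ₜ[K] S° u) := by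
  induction P using TensorProduct.induction_on with
  | zero => simp
  | add x y hx hy => simp only [map_add, add_mul, hx, hy]
  | tmul a b =>
    simp only [TensorProduct.map_tmul, LinearMap.comp_apply, TensorProduct.mk_apply,
      LinearMap.flip_apply, LinearMap.mulRight_apply, mul'_apply]
    -- LHS: (((a ⊗ₜ 1) * τD) * (b ⊗ₜ 1)) * (u ⊗ₜ 1)
    -- RHS: (((1 ⊗ₜ S° a) * τD) * (1 ⊗ₜ S° b)) * (1 ⊗ₜ S° u)
    rw [moveA' hS2 hΛ a]
    simp only [mul_assoc]
    congr 1
    calc (TensorProduct.comm K H H) (comul (R := K) Λ) *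
          ((b ⊗ₜ[K] (1:H)) * (u ⊗ₜ[K] (1:H)))
        = (TensorProduct.comm K H H) (comul (R := K) Λ) * ((b * u) ⊗ₜ[K] (1:H)) := by
          rw [Algebra.TensorProduct.tmul_mul_tmul, mul_one]
      _ = (TensorProduct.comm K H H) (comul (R := K) Λ) * ((1:H) ⊗ₜ[K] S° (b * u)) := by
          rw [moveB' hS2 hΛ']
      _ = (TensorProduct.comm K H H) (comul (R := K) Λ) *
            ((1:H) ⊗ₜ[K] (S° u * S° b)) := by rw [S_mul]
      _ = (TensorProduct.comm K H H) (comul (R := K) Λ) *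
            ((1:H) ⊗ₜ[K] (S° b * S° u)) := by rw [hScen]
      _ = (TensorProduct.comm K H H) (comul (R := K) Λ) *
            (((1:H) ⊗ₜ[K] S° b) * ((1:H) ⊗ₜ[K] S° u)) := by
          rw [Algebra.TensorProduct.tmul_mul_tmul, one_mul]

end Assembly

end DeltaRAux

/-- Let `(H,R)` be a finite dimensional quasi-triangular Hopf algebra.
If `H` is unimodular and `S² = id`, then every left integral `Λ` of `H` is cocommutative
with respect to the comultiplication `Δ_R` of the transmuted braided group. -/
theorem deltaR_integral_cocommutative [FiniteDimensional K H]
    (R : H ⊗[K] H) (hR : IsQuasiTriangular K H R)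
    (hUnimodular : ∀ x : H, IsLeftIntegral K H x ↔ IsRightIntegral K H x)
    (hS2 : ∀ h : H, HopfAlgebra.antipode (R := K) (HopfAlgebra.antipode (R := K) h) = h)
    (Λ : H) (hΛ : IsLeftIntegral K H Λ) :
    deltaR K H R Λ = (TensorProduct.comm K H H) (deltaR K H R Λ) := by
  classical
  obtain ⟨hU, hint, hA1, hA2⟩ := hR
  have hΛ' : ∀ h : H, Λ * h = (Coalgebra.counit (R := K) h) • Λ := (hUnimodular Λ).mp hΛ
  have hΛ0 : ∀ h : H, h * Λ = (Coalgebra.counit (R := K) h) • Λ := hΛ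
  set u : H := LinearMap.mul' K H ((TensorProduct.comm K H H)
    (LinearMap.lTensor H (HopfAlgebra.antipode (R := K)) R)) with hu
  have hq3 := DeltaRAux.Q3 hS2 hU hA1 hA2
  have hq5 := DeltaRAux.Q5 hS2 hU hA1 hA2
  have hcen : ∀ x, u * x = x * u := fun x => DeltaRAux.uCentral hS2 hint hu x
  have hScen : ∀ x, HopfAlgebra.antipode (R := K) u * x = x * HopfAlgebra.antipode (R := K) u :=
    fun x => DeltaRAux.SuCentral hS2 hcen x
  have hSu : HopfAlgebra.antipode (R := K) u =
      LinearMap.mul' K H (LinearMap.rTensor H (HopfAlgebra.antipode (R := K)) R) := by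
    rw [hu]; exact DeltaRAux.Su_eq hS2 R
  have hν : LinearMap.mul' K H ((TensorProduct.comm K H H)
      (LinearMap.rTensor H (HopfAlgebra.antipode (R := K)) R)) = u := by rw [hq3, hu]
  have star : ((1:H) ⊗ₜ[K] u) * Coalgebra.comul (R := K) Λ =
      (TensorProduct.comm K H H) (Coalgebra.comul (R := K) Λ) *
        ((1:H) ⊗ₜ[K] HopfAlgebra.antipode (R := K) u) := by
    have h1 := DeltaRAux.starA hS2 hΛ0 R
    have h2 := DeltaRAux.starB hS2 hΛ' R
    rw [hν] at h1
    rw [← hSu] at h2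
    calc ((1:H) ⊗ₜ[K] u) * Coalgebra.comul (R := K) Λ
        = R * Coalgebra.comul (R := K) Λ := h1.symm
      _ = (TensorProduct.comm K H H) (Coalgebra.comul (R := K) Λ) * R := hint Λ
      _ = (TensorProduct.comm K H H) (Coalgebra.comul (R := K) Λ) *
            ((1:H) ⊗ₜ[K] HopfAlgebra.antipode (R := K) u) := h2
  have m1 := DeltaRAux.M1 (K := K) (H := H) Λ R
  rw [hA1] at m1
  have m2 := DeltaRAux.M2 hS2 hΛ' R R
  rw [hν] at m2
  have hX := m1.trans m2
  have c1 := DeltaRAux.C1 star hcen hScen R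
  have cx := DeltaRAux.commX (Λ := Λ) (u := u) R
  have c2 := DeltaRAux.C2 hS2 hΛ0 hΛ' hScen R
  rw [hq5] at c2
  rw [hX, cx, c2, ← c1]
end

section
/- Let C be a fusion category over k and let (M,⊗,a) be a k-linear abelian semisimple left module category over C. Let M be an object of M and A = Hom̲(M,M) its internal End algebra in C. Then for any right A-module (U,q) in C and any object V of M, there is an isomorphism ζ_{U,V} : Hom_M(U ⊗_A M, V) → Hom_A(U, Hom̲(M,V)) which is natural in both U and V. -/
open CategoryTheory MonoidalCategory CategoryTheory.Limits

universe v₁ u₁ v₂ u₂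

/-!
The representing bijection `η : Hom_M(U ⊗ M, V) ≃ Hom_C(U, Hom̲(M,V))` has inverse
`φ ↦ (φ ⊗ id_M) ≫ ev`. Under it, `φ` is `A`-linear exactly when `(φ ⊗ id_M) ≫ ev`
coequalizes the pair `(U ⊗ A) ⊗ M ⇉ U ⊗ M` defining `U ⊗_A M`; so `A`-linear maps
`U ⟶ Hom̲(M,V)` correspond to morphisms out of the coequalizer, and naturality in `U` and
`V` is inherited from that of `η`.
-/

/-- A (left) module category structure of a monoidal category `C` on a category `M`:
an action bifunctor together with associativity and unit isomorphisms satisfying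
naturality, the pentagon and the triangle axioms. -/
structure CModuleStr (C : Type u₁) [Category.{v₁} C] [MonoidalCategory C]
    (M : Type u₂) [Category.{v₂} M] where
  act : C ⥤ M ⥤ M
  assocIso : ∀ (X Y : C) (m : M),
    (act.obj (X ⊗ Y)).obj m ≅ (act.obj X).obj ((act.obj Y).obj m)
  unitIso : ∀ m : M, (act.obj (𝟙_ C)).obj m ≅ m
  assoc_natural_left : ∀ {X X' : C} (f : X ⟶ X') (Y : C) (m : M),
    (act.map (f ▷ Y)).app m ≫ (assocIso X' Y m).hom
      = (assocIso X Y m).hom ≫ ((act.map f).app ((act.obj Y).obj m))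
  assoc_natural_mid : ∀ (X : C) {Y Y' : C} (g : Y ⟶ Y') (m : M),
    (act.map (X ◁ g)).app m ≫ (assocIso X Y' m).hom
      = (assocIso X Y m).hom ≫ (act.obj X).map ((act.map g).app m)
  assoc_natural_right : ∀ (X Y : C) {m m' : M} (h : m ⟶ m'),
    (act.obj (X ⊗ Y)).map h ≫ (assocIso X Y m').hom
      = (assocIso X Y m).hom ≫ (act.obj X).map ((act.obj Y).map h)
  unit_natural : ∀ {m m' : M} (h : m ⟶ m'),
    (act.obj (𝟙_ C)).map h ≫ (unitIso m').hom = (unitIso m).hom ≫ h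
  pentagon : ∀ (X Y Z : C) (m : M),
    (act.map (α_ X Y Z).hom).app m ≫ (assocIso X (Y ⊗ Z) m).hom ≫
        (act.obj X).map (assocIso Y Z m).hom
      = (assocIso (X ⊗ Y) Z m).hom ≫ (assocIso X Y ((act.obj Z).obj m)).hom
  triangle : ∀ (X : C) (m : M),
    (act.map (ρ_ X).hom).app m
      = (assocIso X (𝟙_ C) m).hom ≫ (act.obj X).map (unitIso m).hom

variable {C : Type u₁} [Category.{v₁} C] [MonoidalCategory C]
  {M : Type u₂} [Category.{v₂} M]

/-- An internal-Hom datum for a pair of objects `M₁, M₂` of a module category: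
an object of `C` representing `X ↦ Hom_M(X ⊗ M₁, M₂)`. -/
structure IHom (Φ : CModuleStr C M) (M₁ M₂ : M) where
  obj : C
  η : ∀ X : C, ((Φ.act.obj X).obj M₁ ⟶ M₂) ≃ (X ⟶ obj)
  naturality : ∀ {X X' : C} (f : X ⟶ X') (g : (Φ.act.obj X').obj M₁ ⟶ M₂),
    η X ((Φ.act.map f).app M₁ ≫ g) = f ≫ η X' g

/-- The evaluation morphism `Hom̲(M₁,M₂) ⊗ M₁ ⟶ M₂`. -/
noncomputable def IHom.ev {Φ : CModuleStr C M} {M₁ M₂ : M} (ih : IHom Φ M₁ M₂) :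
    (Φ.act.obj ih.obj).obj M₁ ⟶ M₂ :=
  (ih.η ih.obj).symm (𝟙 ih.obj)

/-- The multiplication of the internal-End algebra `A = Hom̲(M,M)`. -/
noncomputable def IHom.mul {Φ : CModuleStr C M} {m : M} (ih : IHom Φ m m) :
    ih.obj ⊗ ih.obj ⟶ ih.obj :=
  ih.η (ih.obj ⊗ ih.obj)
    ((Φ.assocIso ih.obj ih.obj m).hom ≫ (Φ.act.obj ih.obj).map ih.ev ≫ ih.ev)

/-- The unit of the internal-End algebra `A = Hom̲(M,M)`. -/
noncomputable def IHom.unit {Φ : CModuleStr C M} {m : M} (ih : IHom Φ m m) :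
    𝟙_ C ⟶ ih.obj :=
  ih.η (𝟙_ C) (Φ.unitIso m).hom

/-- The right `A = Hom̲(M,M)`-action `μ_{M,M,V}` on the internal Hom `Hom̲(M,V)`. -/
noncomputable def IHom.rAct {Φ : CModuleStr C M} {m V : M} (ihM : IHom Φ m m)
    (ihV : IHom Φ m V) : ihV.obj ⊗ ihM.obj ⟶ ihV.obj :=
  ihV.η (ihV.obj ⊗ ihM.obj)
    ((Φ.assocIso ihV.obj ihM.obj m).hom ≫ (Φ.act.obj ihV.obj).map ihM.ev ≫ ihV.ev)

/-- `(U, q)` is a right module in `C` over the internal-End algebra `A = Hom̲(M,M)`. -/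
def IsRightModule {Φ : CModuleStr C M} {m : M} (ihM : IHom Φ m m)
    (U : C) (q : U ⊗ ihM.obj ⟶ U) : Prop :=
  ((U ◁ ihM.unit) ≫ q = (ρ_ U).hom) ∧
  ((U ◁ ihM.mul) ≫ q = (α_ U ihM.obj ihM.obj).inv ≫ (q ▷ ihM.obj) ≫ q)

/-- A morphism of right `A`-modules in `C`. -/
def IsRightModuleHom {Φ : CModuleStr C M} {m : M} (ihM : IHom Φ m m)
    {U U' : C} (q : U ⊗ ihM.obj ⟶ U) (q' : U' ⊗ ihM.obj ⟶ U') (φ : U ⟶ U') : Prop :=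
  q ≫ φ = (φ ▷ ihM.obj) ≫ q'

/-- The pair of morphisms `(U ⊗ A) ⊗ M ⇉ U ⊗ M` whose coequalizer is `U ⊗_A M`. -/
noncomputable def tensorPairLeft {Φ : CModuleStr C M} {m : M} (ihM : IHom Φ m m)
    (U : C) (q : U ⊗ ihM.obj ⟶ U) :
    (Φ.act.obj (U ⊗ ihM.obj)).obj m ⟶ (Φ.act.obj U).obj m :=
  (Φ.act.map q).app m

/-- The second of the two morphisms `(U ⊗ A) ⊗ M ⇉ U ⊗ M`, namely
`(id_U ⊗ ev) ∘ a_{U,A,M}`. -/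
noncomputable def tensorPairRight {Φ : CModuleStr C M} {m : M} (ihM : IHom Φ m m)
    (U : C) : (Φ.act.obj (U ⊗ ihM.obj)).obj m ⟶ (Φ.act.obj U).obj m :=
  (Φ.assocIso U ihM.obj m).hom ≫ (Φ.act.obj U).map ihM.ev

/-- Every object is a finite biproduct of simple objects. -/
def AllSemisimple (E : Type*) [Category E] [Preadditive E] [HasFiniteBiproducts E] : Prop :=
  ∀ X : E, ∃ (n : ℕ) (f : Fin n → E), (∀ i, Simple (f i)) ∧ Nonempty (X ≅ ⨁ f)

namespace IHom

variable {Φ : CModuleStr C M} {M₁ M₂ : M}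

theorem η_symm_comp (ih : IHom Φ M₁ M₂) {X X' : C} (f : X ⟶ X') (g : X' ⟶ ih.obj) :
    (ih.η X).symm (f ≫ g) = (Φ.act.map f).app M₁ ≫ (ih.η X').symm g := by
  rw [Equiv.symm_apply_eq, ih.naturality, Equiv.apply_symm_apply]

theorem η_symm_eq (ih : IHom Φ M₁ M₂) {X : C} (f : X ⟶ ih.obj) :
    (ih.η X).symm f = (Φ.act.map f).app M₁ ≫ ih.ev := by
  rw [← Category.comp_id f, η_symm_comp, Category.comp_id, ev]

theorem act_map_η_app_comp_ev (ih : IHom Φ M₁ M₂) {X : C} (g : (Φ.act.obj X).obj M₁ ⟶ M₂) :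
    (Φ.act.map (ih.η X g)).app M₁ ≫ ih.ev = g := by
  rw [← η_symm_eq, Equiv.symm_apply_apply]

theorem η_comp {V : M} (ih : IHom Φ M₁ M₂) (ih' : IHom Φ M₁ V) {X : C}
    (g : (Φ.act.obj X).obj M₁ ⟶ M₂) (v : M₂ ⟶ V) :
    ih'.η X (g ≫ v) = ih.η X g ≫ ih'.η ih.obj (ih.ev ≫ v) := by
  rw [← ih'.naturality, ← Category.assoc, act_map_η_app_comp_ev]

end IHom

section

variable {Φ : CModuleStr C M} {m V : M} (ihM : IHom Φ m m) (ihV : IHom Φ m V)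

theorem η_symm_whiskerRight_comp_rAct {U : C} (φ : U ⟶ ihV.obj) :
    (ihV.η _).symm ((φ ▷ ihM.obj) ≫ ihM.rAct ihV)
      = tensorPairRight ihM U ≫ (Φ.act.map φ).app m ≫ ihV.ev := by
  rw [IHom.η_symm_comp, IHom.rAct, Equiv.symm_apply_apply, reassoc_of% Φ.assoc_natural_left,
    ← NatTrans.naturality_assoc, tensorPairRight, Category.assoc]

theorem isRightModuleHom_rAct_iff {U : C} (q : U ⊗ ihM.obj ⟶ U) (φ : U ⟶ ihV.obj) :
    IsRightModuleHom ihM q (ihM.rAct ihV) φ ↔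
      tensorPairLeft ihM U q ≫ (Φ.act.map φ).app m ≫ ihV.ev
        = tensorPairRight ihM U ≫ (Φ.act.map φ).app m ≫ ihV.ev := by
  rw [IsRightModuleHom, ← (ihV.η _).symm.apply_eq_iff_eq, IHom.η_symm_comp,
    η_symm_whiskerRight_comp_rAct, IHom.η_symm_eq, tensorPairLeft]

end

theorem internal_hom_tensor_adjunction_general
    [Abelian M]
    (Φ : CModuleStr C M) (m : M) (ihM : IHom Φ m m)
    (U : C) (q : U ⊗ ihM.obj ⟶ U)
    (V : M) (ihV : IHom Φ m V) :
    -- (a) `ζ x` is a morphism of right `A`-modules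
    (∀ x : coequalizer (tensorPairLeft ihM U q) (tensorPairRight ihM U) ⟶ V,
      IsRightModuleHom ihM q (ihM.rAct ihV)
        (ihV.η U (coequalizer.π (tensorPairLeft ihM U q) (tensorPairRight ihM U) ≫ x))) ∧
    -- (b) `ζ` is a bijection onto the `A`-module morphisms
    (∀ φ : U ⟶ ihV.obj, IsRightModuleHom ihM q (ihM.rAct ihV) φ →
      ∃! x : coequalizer (tensorPairLeft ihM U q) (tensorPairRight ihM U) ⟶ V,
        ihV.η U (coequalizer.π (tensorPairLeft ihM U q) (tensorPairRight ihM U) ≫ x) = φ) ∧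
    -- (c) naturality in `V`
    (∀ (V' : M) (ihV' : IHom Φ m V') (v : V ⟶ V')
        (x : coequalizer (tensorPairLeft ihM U q) (tensorPairRight ihM U) ⟶ V),
      ihV'.η U (coequalizer.π (tensorPairLeft ihM U q) (tensorPairRight ihM U) ≫ x ≫ v)
        = ihV.η U (coequalizer.π (tensorPairLeft ihM U q) (tensorPairRight ihM U) ≫ x) ≫
            ihV'.η ihV.obj (ihV.ev ≫ v)) ∧
    -- (d) naturality in `U`
    (∀ (U' : C) (q' : U' ⊗ ihM.obj ⟶ U'), IsRightModule ihM U' q' →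
      ∀ ψ : U' ⟶ U, IsRightModuleHom ihM q' q ψ →
      ∀ w : coequalizer (tensorPairLeft ihM U' q') (tensorPairRight ihM U') ⟶
          coequalizer (tensorPairLeft ihM U q) (tensorPairRight ihM U),
        (Φ.act.map ψ).app m ≫ coequalizer.π (tensorPairLeft ihM U q) (tensorPairRight ihM U)
          = coequalizer.π (tensorPairLeft ihM U' q') (tensorPairRight ihM U') ≫ w →
        ∀ x : coequalizer (tensorPairLeft ihM U q) (tensorPairRight ihM U) ⟶ V,
          ihV.η U' (coequalizer.π (tensorPairLeft ihM U' q') (tensorPairRight ihM U') ≫ w ≫ x)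
            = ψ ≫ ihV.η U (coequalizer.π (tensorPairLeft ihM U q) (tensorPairRight ihM U) ≫ x)) := by
  refine ⟨fun x => ?_, fun φ hφ => ?_, fun V' ihV' v x => ?_,
    fun U' q' _ ψ _ w hw x => ?_⟩
  · rw [isRightModuleHom_rAct_iff, IHom.act_map_η_app_comp_ev, coequalizer.condition_assoc]
  · rw [isRightModuleHom_rAct_iff] at hφ
    refine ⟨coequalizer.desc _ hφ, ?_, fun y hy => coequalizer.hom_ext ?_⟩
    · dsimp only
      rw [coequalizer.π_desc, ← IHom.η_symm_eq, Equiv.apply_symm_apply]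
    · rw [coequalizer.π_desc, ← hy, IHom.act_map_η_app_comp_ev]
  · rw [← Category.assoc]
    exact IHom.η_comp ihV ihV' _ v
  · rw [← reassoc_of% hw, ihV.naturality]

/-- Let `C` be a fusion category over `k` and `M` a `k`-linear abelian
semisimple module category over `C`.  Let `M₀ ∈ M`, `A = Hom̲(M₀,M₀)` its internal End
algebra.  For every right `A`-module `(U,q)` in `C` and every `V ∈ M` the canonical map
`ζ : Hom_M(U ⊗_A M₀, V) → Hom_A(U, Hom̲(M₀,V))`, `x ↦ η(π ≫ x)`, is a bijection onto
the `A`-module morphisms, natural in `U` and `V` (where `U ⊗_A M₀` is the coequalizer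
of `q ⊗ id` and `(id ⊗ ev) ∘ a_{U,A,M₀}`). -/
theorem internal_hom_tensor_adjunction
    (k : Type*) [Field k]
    [Abelian C] [HasFiniteBiproducts C] [Linear k C] [MonoidalPreadditive C] [RigidCategory C]
    (hCss : AllSemisimple C) (hCunit : Simple (𝟙_ C))
    (hCfin : ∃ (n : ℕ) (S : Fin n → C), ∀ X : C, Simple X → ∃ i, Nonempty (X ≅ S i))
    (hChom : ∀ X Y : C, FiniteDimensional k (X ⟶ Y))
    [Abelian M] [HasFiniteBiproducts M] [Linear k M] (hMss : AllSemisimple M)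
    (Φ : CModuleStr C M) (m : M) (ihM : IHom Φ m m)
    (U : C) (q : U ⊗ ihM.obj ⟶ U) (hU : IsRightModule ihM U q)
    (V : M) (ihV : IHom Φ m V) :
    -- (a) `ζ x` is a morphism of right `A`-modules
    (∀ x : coequalizer (tensorPairLeft ihM U q) (tensorPairRight ihM U) ⟶ V,
      IsRightModuleHom ihM q (ihM.rAct ihV)
        (ihV.η U (coequalizer.π (tensorPairLeft ihM U q) (tensorPairRight ihM U) ≫ x))) ∧
    -- (b) `ζ` is a bijection onto the `A`-module morphisms
    (∀ φ : U ⟶ ihV.obj, IsRightModuleHom ihM q (ihM.rAct ihV) φ →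
      ∃! x : coequalizer (tensorPairLeft ihM U q) (tensorPairRight ihM U) ⟶ V,
        ihV.η U (coequalizer.π (tensorPairLeft ihM U q) (tensorPairRight ihM U) ≫ x) = φ) ∧
    -- (c) naturality in `V`
    (∀ (V' : M) (ihV' : IHom Φ m V') (v : V ⟶ V')
        (x : coequalizer (tensorPairLeft ihM U q) (tensorPairRight ihM U) ⟶ V),
      ihV'.η U (coequalizer.π (tensorPairLeft ihM U q) (tensorPairRight ihM U) ≫ x ≫ v)
        = ihV.η U (coequalizer.π (tensorPairLeft ihM U q) (tensorPairRight ihM U) ≫ x) ≫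
            ihV'.η ihV.obj (ihV.ev ≫ v)) ∧
    -- (d) naturality in `U`
    (∀ (U' : C) (q' : U' ⊗ ihM.obj ⟶ U'), IsRightModule ihM U' q' →
      ∀ ψ : U' ⟶ U, IsRightModuleHom ihM q' q ψ →
      ∀ w : coequalizer (tensorPairLeft ihM U' q') (tensorPairRight ihM U') ⟶
          coequalizer (tensorPairLeft ihM U q) (tensorPairRight ihM U),
        (Φ.act.map ψ).app m ≫ coequalizer.π (tensorPairLeft ihM U q) (tensorPairRight ihM U)
          = coequalizer.π (tensorPairLeft ihM U' q') (tensorPairRight ihM U') ≫ w →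
        ∀ x : coequalizer (tensorPairLeft ihM U q) (tensorPairRight ihM U) ⟶ V,
          ihV.η U' (coequalizer.π (tensorPairLeft ihM U' q') (tensorPairRight ihM U') ≫ w ≫ x)
            = ψ ≫ ihV.η U (coequalizer.π (tensorPairLeft ihM U q) (tensorPairRight ihM U) ≫ x)) :=
  internal_hom_tensor_adjunction_general Φ m ihM U q V ihV
end

section
/- Let (H,R) be a finite-dimensional semisimple and cosemisimple quasi-triangular Hopf algebra over a field k, D a minimal H-adjoint-stable subcoalgebra of H_R, and W a finite-dimensional nonzero left D-comodule. Then there is a natural isomorphism of functors Hom_H^D(H⊗W, •) ≅ W* □_D • from _H^D M to vector spaces; concretely, for each V ∈ _H^D M the map f ↦ Σᵢ wᵢ* ⊗ f(1⊗wᵢ) (for a dual basis {wᵢ, wᵢ*} of W) is an isomorphism Hom_H^D(H⊗W, V) → W* □_D V, natural in V. -/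
open TensorProduct LinearMap

variable (K : Type) [Field K] (H : Type) [Ring H] [HopfAlgebra K H]

/-- A subcoalgebra of `(H, Δ)`. -/
def IsSubcoalgebra (D : Submodule K H) : Prop :=
  ∀ a ∈ D, Coalgebra.comul (R := K) a ∈ Submodule.map₂ (TensorProduct.mk K H H) D D

/-- A simple (nonzero, minimal) subcoalgebra of `(H, Δ)`. -/
def IsSimpleSubcoalgebra (D : Submodule K H) : Prop :=
  D ≠ ⊥ ∧ IsSubcoalgebra K H D ∧
    ∀ D' : Submodule K H, D' ≤ D → IsSubcoalgebra K H D' → D' = ⊥ ∨ D' = D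

/-- `H` is a cosemisimple coalgebra: the sum of its simple subcoalgebras is everything. -/
def IsCosemisimpleCoalgebra : Prop :=
  sSup {D : Submodule K H | IsSimpleSubcoalgebra K H D} = ⊤

/-- A subcoalgebra of the transmuted braided group `(H, Δ_R)`. -/
def IsSubcoalgebraR (R : H ⊗[K] H) (D : Submodule K H) : Prop :=
  ∀ a ∈ D, deltaR K H R a ∈ Submodule.map₂ (TensorProduct.mk K H H) D D

/-- A simple (nonzero, minimal) subcoalgebra of `(H, Δ_R)`. -/
def IsSimpleSubcoalgebraR (R : H ⊗[K] H) (D : Submodule K H) : Prop :=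
  D ≠ ⊥ ∧ IsSubcoalgebraR K H R D ∧
    ∀ D' : Submodule K H, D' ≤ D → IsSubcoalgebraR K H R D' → D' = ⊥ ∨ D' = D

/-- The coalgebra `(H, Δ_R)` is cosemisimple: it is the sum of its simple subcoalgebras. -/
def IsCosemisimpleR (R : H ⊗[K] H) : Prop :=
  sSup {D : Submodule K H | IsSimpleSubcoalgebraR K H R D} = ⊤

/-- A minimal (irreducible) Yetter–Drinfeld submodule of `H`. -/
def IsMinimalYDSubmodule (D : Submodule K H) : Prop :=
  D ≠ ⊥ ∧ IsYDSubmodule K H D ∧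
    ∀ D' : Submodule K H, D' ≤ D → IsYDSubmodule K H D' → D' = ⊥ ∨ D' = D

/-- An `H`-adjoint-stable subcoalgebra of the transmuted braided group `H_R`:
a subcoalgebra of `(H, Δ_R)` which is stable under the left adjoint action. -/
def IsAdjointStableSubcoalgebra (R : H ⊗[K] H) (D : Submodule K H) : Prop :=
  (∀ (h : H), ∀ a ∈ D, adAct K H h a ∈ D) ∧
  (∀ a ∈ D, deltaR K H R a ∈ Submodule.map₂ (TensorProduct.mk K H H) D D)

/-- A minimal (nonzero) `H`-adjoint-stable subcoalgebra of `H_R`. -/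
def IsMinimalAdjointStableSubcoalgebra (R : H ⊗[K] H) (D : Submodule K H) : Prop :=
  D ≠ ⊥ ∧ IsAdjointStableSubcoalgebra K H R D ∧
    ∀ D' : Submodule K H, D' ≤ D → IsAdjointStableSubcoalgebra K H R D' → D' = ⊥ ∨ D' = D

/-- An object of `_H^{H_R}M`: a left `H`-module `V` together with a left comodule
structure `ρ_R` over the transmuted braided group `(H, Δ_R)`, satisfying the
compatibility `ρ_R(hv) = Σ h₍₁₎ ·_ad v⁽⁻¹⁾ ⊗ h₍₂₎ v⁽⁰⁾`.  By Zhu's lemma, this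
category is the Yetter–Drinfeld category `_H^H YD`. -/
structure RModStr (R : H ⊗[K] H) (V : Type*) [AddCommGroup V] [Module K V] where
  act : H →ₐ[K] Module.End K V
  coact : V →ₗ[K] H ⊗[K] V
  counit_coact : ∀ v : V,
    (TensorProduct.lid K V)
      ((LinearMap.rTensor V (Coalgebra.counit (R := K))) (coact v)) = v
  coassocR : (LinearMap.rTensor V (deltaR K H R)) ∘ₗ coact
      = (TensorProduct.assoc K H H V).symm.toLinearMap ∘ₗ
        (LinearMap.lTensor H coact) ∘ₗ coact
  compat : coact ∘ₗ (TensorProduct.lift act.toLinearMap)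
      = (TensorProduct.map (adMap K H) (TensorProduct.lift act.toLinearMap)) ∘ₗ
        (TensorProduct.tensorTensorTensorComm K H H H V).toLinearMap ∘ₗ
        (TensorProduct.map (Coalgebra.comul (R := K)) coact)

/-- The object lies in the subcategory `_H^D M`: its coaction takes values in `D ⊗ V`. -/
def memDCat (R : H ⊗[K] H) (D : Submodule K H) {V : Type*} [AddCommGroup V]
    [Module K V] (s : RModStr K H R V) : Prop :=
  ∀ v : V, s.coact v ∈ Submodule.map₂ (TensorProduct.mk K H V) D ⊤

/-- Irreducibility of an object of `_H^{H_R}M = _H^H YD`: it is nonzero and has no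
nontrivial subspace stable under the action and the coaction. -/
def RModIrreducible (R : H ⊗[K] H) {V : Type*} [AddCommGroup V] [Module K V]
    (s : RModStr K H R V) : Prop :=
  (⊥ : Submodule K V) ≠ ⊤ ∧
    ∀ W : Submodule K V, (∀ h : H, ∀ w ∈ W, s.act h w ∈ W) →
      (∀ w ∈ W, s.coact w ∈ Submodule.map₂ (TensorProduct.mk K H V) ⊤ W) →
      W = ⊥ ∨ W = ⊤

/-- A left comodule structure over a subcoalgebra `D` of the transmuted braided
group `(H, Δ_R)`. -/
structure DComodStr (R : H ⊗[K] H) (D : Submodule K H) (W : Type*) [AddCommGroup W]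
    [Module K W] where
  coact : W →ₗ[K] H ⊗[K] W
  mem : ∀ w : W, coact w ∈ Submodule.map₂ (TensorProduct.mk K H W) D ⊤
  counit_coact : ∀ w : W,
    (TensorProduct.lid K W)
      ((LinearMap.rTensor W (Coalgebra.counit (R := K))) (coact w)) = w
  coassocR : (LinearMap.rTensor W (deltaR K H R)) ∘ₗ coact
      = (TensorProduct.assoc K H H W).symm.toLinearMap ∘ₗ
        (LinearMap.lTensor H coact) ∘ₗ coact

/-- The coaction `ρ_R(h ⊗ w) = Σ h₍₁₎ ·_ad w₍₋₁₎ ⊗ (h₍₂₎ ⊗ w₍₀₎)` on `H ⊗ W`. -/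
noncomputable def rhoHW (R : H ⊗[K] H) {D : Submodule K H} {W : Type*} [AddCommGroup W]
    [Module K W] (sW : DComodStr K H R D W) :
    H ⊗[K] W →ₗ[K] H ⊗[K] (H ⊗[K] W) :=
  (TensorProduct.map (adMap K H) LinearMap.id) ∘ₗ
    (TensorProduct.tensorTensorTensorComm K H H H W).toLinearMap ∘ₗ
    (TensorProduct.map (Coalgebra.comul (R := K)) sW.coact)

/-- The cotensor product `X □ Y ⊆ X ⊗ Y` of a right `H`-comodule `(X, ρX)` and a left
`H`-comodule `(Y, ρY)`. -/
noncomputable def cotensor {X Y : Type*} [AddCommGroup X] [Module K X] [AddCommGroup Y]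
    [Module K Y] (ρX : X →ₗ[K] X ⊗[K] H) (ρY : Y →ₗ[K] H ⊗[K] Y) :
    Submodule K (X ⊗[K] Y) :=
  LinearMap.ker ((TensorProduct.assoc K X H Y).toLinearMap ∘ₗ
    (LinearMap.rTensor Y ρX) - (LinearMap.lTensor X ρY))

/-- `ρ*` is the right comodule structure on `W*` dual to the left comodule structure
`coactW` on `W`:  `Σ ⟨f⁽⁰⁾, w⟩ f⁽¹⁾ = Σ w₍₋₁₎ ⟨f, w₍₀₎⟩`. -/
def IsDualCoaction {W : Type*} [AddCommGroup W] [Module K W]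
    (coactW : W →ₗ[K] H ⊗[K] W)
    (ρstar : Module.Dual K W →ₗ[K] (Module.Dual K W) ⊗[K] H) : Prop :=
  ∀ (f : Module.Dual K W) (w : W),
    (TensorProduct.lid K H) ((LinearMap.rTensor H ((Module.Dual.eval K W) w)) (ρstar f))
      = (TensorProduct.rid K H) ((LinearMap.lTensor H f) (coactW w))

/-- The space `Hom_H^D(V₁, V₂)` of maps which are simultaneously left `H`-module and
left comodule morphisms. -/
def homHD (R : H ⊗[K] H) {V₁ V₂ : Type*} [AddCommGroup V₁] [Module K V₁]
    [AddCommGroup V₂] [Module K V₂] (s : RModStr K H R V₁) (t : RModStr K H R V₂) :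
    Submodule K (V₁ →ₗ[K] V₂) where
  carrier := {f | (∀ h : H, (t.act h : V₂ →ₗ[K] V₂) ∘ₗ f = f ∘ₗ (s.act h : V₁ →ₗ[K] V₁)) ∧
    (LinearMap.lTensor H f) ∘ₗ s.coact = t.coact ∘ₗ f}
  add_mem' := by
    rintro f g ⟨hf1, hf2⟩ ⟨hg1, hg2⟩
    refine ⟨fun h => ?_, ?_⟩
    · rw [LinearMap.comp_add, LinearMap.add_comp, hf1 h, hg1 h]
    · rw [LinearMap.lTensor_add, LinearMap.add_comp, LinearMap.comp_add, hf2, hg2]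
  zero_mem' := by
    refine ⟨fun h => ?_, ?_⟩ <;> simp
  smul_mem' := by
    rintro c f ⟨hf1, hf2⟩
    refine ⟨fun h => ?_, ?_⟩
    · rw [LinearMap.comp_smul, LinearMap.smul_comp, hf1 h]
    · rw [LinearMap.lTensor_smul, LinearMap.smul_comp, LinearMap.comp_smul, hf2]

/-- The algebra `Hom_H^D(V, V)` of endomorphisms of `V` which are simultaneously left
`H`-module and left comodule morphisms. -/
def endHD (R : H ⊗[K] H) {V : Type*} [AddCommGroup V] [Module K V]
    (s : RModStr K H R V) : Subalgebra K (Module.End K V) where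
  carrier := {f | (∀ h : H, (s.act h : V →ₗ[K] V) ∘ₗ f = f ∘ₗ (s.act h : V →ₗ[K] V)) ∧
    (LinearMap.lTensor H f) ∘ₗ s.coact = s.coact ∘ₗ f}
  add_mem' := by
    rintro f g ⟨hf1, hf2⟩ ⟨hg1, hg2⟩
    refine ⟨fun h => ?_, ?_⟩
    · rw [LinearMap.comp_add, LinearMap.add_comp, hf1 h, hg1 h]
    · rw [LinearMap.lTensor_add, LinearMap.add_comp, LinearMap.comp_add, hf2, hg2]
  mul_mem' := by
    rintro f g ⟨hf1, hf2⟩ ⟨hg1, hg2⟩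
    refine ⟨fun h => ?_, ?_⟩
    · show (s.act h : V →ₗ[K] V) ∘ₗ (f ∘ₗ g) = (f ∘ₗ g) ∘ₗ (s.act h : V →ₗ[K] V)
      rw [← LinearMap.comp_assoc, hf1 h, LinearMap.comp_assoc, hg1 h, LinearMap.comp_assoc]
    · show (LinearMap.lTensor H (f ∘ₗ g)) ∘ₗ s.coact = s.coact ∘ₗ (f ∘ₗ g)
      rw [LinearMap.lTensor_comp, LinearMap.comp_assoc, hg2, ← LinearMap.comp_assoc, hf2,
        LinearMap.comp_assoc]
  algebraMap_mem' := by
    intro c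
    refine ⟨fun h => ?_, ?_⟩
    · ext v
      simp [Module.algebraMap_end_apply]
    · ext v
      have : ((algebraMap K (Module.End K V)) c) = c • (LinearMap.id (M := V)) := by
        ext w; simp [Module.algebraMap_end_apply]
      simp [this, Module.algebraMap_end_apply]

/-- The canonical element `Σᵢ wᵢ* ⊗ (1_H ⊗ wᵢ) ∈ W* ⊗ (H ⊗ W)` (for a dual basis
`{wᵢ, wᵢ*}` of the finite dimensional space `W`). -/
noncomputable def coevHW (W : Type*) [AddCommGroup W] [Module K W]
    [FiniteDimensional K W] : (Module.Dual K W) ⊗[K] (H ⊗[K] W) :=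
  (LinearMap.lTensor (Module.Dual K W) ((TensorProduct.mk K H W) 1))
    ((TensorProduct.comm K W (Module.Dual K W)) ((coevaluation K W) 1))

/-- `f ↦ Σᵢ wᵢ* ⊗ f(1 ⊗ wᵢ)`, the canonical map from maps out of `H ⊗ W` to `W* ⊗ V`. -/
noncomputable def muW {W : Type*} [AddCommGroup W] [Module K W] [FiniteDimensional K W]
    {V : Type*} [AddCommGroup V] [Module K V] (f : H ⊗[K] W →ₗ[K] V) :
    (Module.Dual K W) ⊗[K] V :=
  (LinearMap.lTensor (Module.Dual K W) f) (coevHW K H W)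

/-! Frobenius reciprocity for the free module `H ⊗ W`. An `H`-linear `f : H ⊗ W → V` is determined
by `g = f(1 ⊗ -)`, and every linear `g` extends `H`-linearly by `h ⊗ w ↦ h·g(w)`. Since
`ρ_R(1 ⊗ w) = w₍₋₁₎ ⊗ 1 ⊗ w₍₀₎`, `g` is a `D`-comodule map when `f` is; conversely the compatibility
`ρ_R(hv) = h₍₁₎ ·_ad v⁽⁻¹⁾ ⊗ h₍₂₎v⁽⁰⁾` of `V` makes the extension of a comodule map a comodule map.
Under `W* ⊗ V ≅ Hom(W, V)`, `Σᵢ wᵢ* ⊗ f(1 ⊗ wᵢ)` corresponds to `g`, and the cotensor condition on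
an element of `W* ⊗ V` says exactly that the corresponding map is a comodule map. -/

section DualTensor

variable {W V : Type*} [AddCommGroup W] [Module K W] [AddCommGroup V] [Module K V]

lemma dualTensorHom_injective [FiniteDimensional K W] :
    Function.Injective (dualTensorHom K W V) :=
  (dualTensorHom_bijective (R := K)).injective

lemma dualTensorHom_lTensor {V' : Type*} [AddCommGroup V'] [Module K V'] (g : V →ₗ[K] V')
    (y : Module.Dual K W ⊗[K] V) :
    dualTensorHom K W V' (LinearMap.lTensor (Module.Dual K W) g y) = g ∘ₗ dualTensorHom K W V y :=
  LinearMap.congr_fun (dualTensorHom_comp_lTensor g) y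

lemma dualTensorHom_comm_coevaluation [FiniteDimensional K W] :
    dualTensorHom K W W (TensorProduct.comm K W (Module.Dual K W) (coevaluation K W 1)) =
      LinearMap.id := by
  ext w
  simp only [coevaluation_apply_one, map_sum, TensorProduct.comm_tmul, LinearMap.sum_apply,
    dualTensorHom_apply, Module.Basis.coord_apply, LinearMap.id_apply]
  exact (Module.Basis.ofVectorSpace K W).sum_repr w

lemma dualTensorHom_assoc_tmul_apply {A : Type*} [AddCommGroup A] [Module K A]
    (x : Module.Dual K W ⊗[K] A) (v : V) (w : W) :
    dualTensorHom K W (A ⊗[K] V) (TensorProduct.assoc K (Module.Dual K W) A V (x ⊗ₜ v)) w =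
      TensorProduct.lid K A (LinearMap.rTensor A (Module.Dual.eval K W w) x) ⊗ₜ v := by
  induction x using TensorProduct.induction_on with
  | zero => simp only [TensorProduct.zero_tmul, map_zero, LinearMap.zero_apply]
  | tmul φ a => simp [TensorProduct.smul_tmul']
  | add x₁ x₂ h₁ h₂ =>
    simp only [TensorProduct.add_tmul, map_add, LinearMap.add_apply, h₁, h₂]

lemma lTensor_dualTensorHom_tmul_apply {A : Type*} [AddCommGroup A] [Module K A]
    (φ : Module.Dual K W) (v : V) (z : A ⊗[K] W) :
    LinearMap.lTensor A (dualTensorHom K W V (φ ⊗ₜ v)) z =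
      TensorProduct.rid K A (LinearMap.lTensor A φ z) ⊗ₜ v := by
  induction z using TensorProduct.induction_on with
  | zero => simp only [map_zero, TensorProduct.zero_tmul]
  | tmul a w => simp [TensorProduct.smul_tmul']
  | add z₁ z₂ h₁ h₂ => simp only [map_add, TensorProduct.add_tmul, h₁, h₂]

end DualTensor

section Cotensor

variable {W V : Type*} [AddCommGroup W] [Module K W] [AddCommGroup V] [Module K V]

lemma dualTensorHom_muW [FiniteDimensional K W] (f : H ⊗[K] W →ₗ[K] V) :
    dualTensorHom K W V (muW K H f) = f ∘ₗ TensorProduct.mk K H W 1 := by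
  rw [muW, coevHW, ← LinearMap.lTensor_comp_apply, dualTensorHom_lTensor,
    dualTensorHom_comm_coevaluation, LinearMap.comp_id]

lemma dualTensorHom_assoc_rTensor_of_isDualCoaction {coactW : W →ₗ[K] H ⊗[K] W}
    {ρstar : Module.Dual K W →ₗ[K] Module.Dual K W ⊗[K] H}
    (hρ : IsDualCoaction K H coactW ρstar) (y : Module.Dual K W ⊗[K] V) :
    dualTensorHom K W (H ⊗[K] V)
        (TensorProduct.assoc K (Module.Dual K W) H V (LinearMap.rTensor V ρstar y)) =
      LinearMap.lTensor H (dualTensorHom K W V y) ∘ₗ coactW := by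
  induction y using TensorProduct.induction_on with
  | zero => ext; simp
  | tmul φ v =>
    ext w
    rw [LinearMap.rTensor_tmul, dualTensorHom_assoc_tmul_apply, LinearMap.comp_apply,
      lTensor_dualTensorHom_tmul_apply, hρ φ w]
  | add y₁ y₂ h₁ h₂ => simp only [map_add, LinearMap.lTensor_add, LinearMap.add_comp, h₁, h₂]

lemma mem_cotensor_iff [FiniteDimensional K W] {coactW : W →ₗ[K] H ⊗[K] W}
    {ρstar : Module.Dual K W →ₗ[K] Module.Dual K W ⊗[K] H}
    (hρ : IsDualCoaction K H coactW ρstar) (coactV : V →ₗ[K] H ⊗[K] V)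
    (y : Module.Dual K W ⊗[K] V) :
    y ∈ cotensor K H ρstar coactV ↔
      LinearMap.lTensor H (dualTensorHom K W V y) ∘ₗ coactW =
        coactV ∘ₗ dualTensorHom K W V y := by
  change TensorProduct.assoc K (Module.Dual K W) H V (LinearMap.rTensor V ρstar y) -
    LinearMap.lTensor (Module.Dual K W) coactV y = 0 ↔ _
  rw [sub_eq_zero, ← (dualTensorHom_injective K).eq_iff,
    dualTensorHom_assoc_rTensor_of_isDualCoaction K H hρ, dualTensorHom_lTensor]

end Cotensor

lemma adMap_one_tmul (a : H) : adMap K H ((1 : H) ⊗ₜ a) = a := by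
  simp [adMap, Bialgebra.comul_one, Algebra.TensorProduct.one_def]

section FrobeniusReciprocity

variable {R : H ⊗[K] H} {D : Submodule K H} {W V : Type*} [AddCommGroup W] [Module K W]
  [AddCommGroup V] [Module K V]

lemma rhoHW_comp_mk_one (sW : DComodStr K H R D W) :
    rhoHW K H R sW ∘ₗ TensorProduct.mk K H W 1 =
      LinearMap.lTensor H (TensorProduct.mk K H W 1) ∘ₗ sW.coact := by
  ext w
  simp only [LinearMap.comp_apply, rhoHW, TensorProduct.mk_apply, LinearEquiv.coe_coe,
    TensorProduct.map_tmul, Bialgebra.comul_one, Algebra.TensorProduct.one_def]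
  induction sW.coact w using TensorProduct.induction_on with
  | zero => simp only [TensorProduct.tmul_zero, map_zero]
  | tmul d w' => simp [TensorProduct.tensorTensorTensorComm_tmul, adMap_one_tmul]
  | add z₁ z₂ h₁ h₂ => simp only [TensorProduct.tmul_add, map_add, h₁, h₂]

noncomputable def inducedHom (t : RModStr K H R V) (g : W →ₗ[K] V) : H ⊗[K] W →ₗ[K] V :=
  TensorProduct.lift t.act.toLinearMap ∘ₗ LinearMap.lTensor H g

lemma inducedHom_tmul (t : RModStr K H R V) (g : W →ₗ[K] V) (h : H) (w : W) :
    inducedHom K H t g (h ⊗ₜ w) = t.act h (g w) := rfl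

lemma inducedHom_comp_mk_one (t : RModStr K H R V) (g : W →ₗ[K] V) :
    inducedHom K H t g ∘ₗ TensorProduct.mk K H W 1 = g := by
  ext w
  simp [inducedHom_tmul]

lemma eq_inducedHom_of_act_comp {sHW : RModStr K H R (H ⊗[K] W)}
    (hact : ∀ h : H, (sHW.act h : Module.End K (H ⊗[K] W)) =
      LinearMap.rTensor W (LinearMap.mulLeft K h))
    (t : RModStr K H R V) {f : H ⊗[K] W →ₗ[K] V}
    (hf : ∀ h : H, (t.act h : Module.End K V) ∘ₗ f = f ∘ₗ (sHW.act h : Module.End K (H ⊗[K] W))) :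
    f = inducedHom K H t (f ∘ₗ TensorProduct.mk K H W 1) := by
  apply TensorProduct.ext'
  intro h w
  have hmul := LinearMap.congr_fun (hf h) ((1 : H) ⊗ₜ w)
  simp only [LinearMap.comp_apply, hact, LinearMap.rTensor_tmul, LinearMap.mulLeft_apply,
    mul_one] at hmul
  rw [inducedHom_tmul, LinearMap.comp_apply, TensorProduct.mk_apply, hmul]

lemma inducedHom_act_comp {sHW : RModStr K H R (H ⊗[K] W)}
    (hact : ∀ h : H, (sHW.act h : Module.End K (H ⊗[K] W)) =
      LinearMap.rTensor W (LinearMap.mulLeft K h))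
    (t : RModStr K H R V) (g : W →ₗ[K] V) (h : H) :
    (t.act h : Module.End K V) ∘ₗ inducedHom K H t g =
      inducedHom K H t g ∘ₗ (sHW.act h : Module.End K (H ⊗[K] W)) := by
  apply TensorProduct.ext'
  intro h' w
  simp [hact, inducedHom_tmul]

lemma lTensor_inducedHom_comp_rhoHW (sW : DComodStr K H R D W) (t : RModStr K H R V)
    {g : W →ₗ[K] V} (hg : LinearMap.lTensor H g ∘ₗ sW.coact = t.coact ∘ₗ g) :
    LinearMap.lTensor H (inducedHom K H t g) ∘ₗ rhoHW K H R sW =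
      t.coact ∘ₗ inducedHom K H t g := by
  have hnat : (LinearMap.lTensor H (inducedHom K H t g) ∘ₗ
        TensorProduct.map (adMap K H) LinearMap.id) ∘ₗ
        (TensorProduct.tensorTensorTensorComm K H H H W).toLinearMap =
      (TensorProduct.map (adMap K H) (TensorProduct.lift t.act.toLinearMap) ∘ₗ
        (TensorProduct.tensorTensorTensorComm K H H H V).toLinearMap) ∘ₗ
        LinearMap.lTensor (H ⊗[K] H) (LinearMap.lTensor H g) := by
    apply TensorProduct.ext_fourfold'
    intro a b c w
    simp [TensorProduct.tensorTensorTensorComm_tmul, inducedHom_tmul]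
  calc LinearMap.lTensor H (inducedHom K H t g) ∘ₗ rhoHW K H R sW
      = TensorProduct.map (adMap K H) (TensorProduct.lift t.act.toLinearMap) ∘ₗ
          (TensorProduct.tensorTensorTensorComm K H H H V).toLinearMap ∘ₗ
          TensorProduct.map Coalgebra.comul (t.coact ∘ₗ g) := by
        rw [← hg, rhoHW]
        simp only [← LinearMap.comp_assoc]
        rw [hnat]
        simp only [LinearMap.comp_assoc, LinearMap.lTensor_comp_map]
    _ = t.coact ∘ₗ inducedHom K H t g := by
        rw [inducedHom, ← LinearMap.comp_assoc _ _ t.coact, t.compat]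
        simp only [LinearMap.comp_assoc, LinearMap.map_comp_lTensor]

lemma lTensor_comp_mk_one_comp_coact (sW : DComodStr K H R D W) (t : RModStr K H R V)
    {f : H ⊗[K] W →ₗ[K] V} (hf : LinearMap.lTensor H f ∘ₗ rhoHW K H R sW = t.coact ∘ₗ f) :
    LinearMap.lTensor H (f ∘ₗ TensorProduct.mk K H W 1) ∘ₗ sW.coact =
      t.coact ∘ₗ f ∘ₗ TensorProduct.mk K H W 1 := by
  rw [LinearMap.lTensor_comp, LinearMap.comp_assoc, ← rhoHW_comp_mk_one,
    ← LinearMap.comp_assoc, hf, LinearMap.comp_assoc]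

end FrobeniusReciprocity

theorem hom_from_HW_iso_cotensor
    (R : H ⊗[K] H)
    (D : Submodule K H)
    (W : Type) [AddCommGroup W] [Module K W] [FiniteDimensional K W]
    (sW : DComodStr K H R D W)
    (ρstar : Module.Dual K W →ₗ[K] (Module.Dual K W) ⊗[K] H)
    (hρstar : IsDualCoaction K H sW.coact ρstar)
    (sHW : RModStr K H R (H ⊗[K] W))
    (hHWact : ∀ h' : H,
      (sHW.act h' : H ⊗[K] W →ₗ[K] H ⊗[K] W) = LinearMap.rTensor W (LinearMap.mulLeft K h'))
    (hHWcoact : sHW.coact = rhoHW K H R sW) :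
    -- the map `μ` lands in the cotensor product, is bijective onto it, and is natural
    (∀ (V : Type) [AddCommGroup V] [Module K V]
        (t : RModStr K H R V), memDCat K H R D t →
        (∀ f ∈ homHD K H R sHW t, muW K H f ∈ cotensor K H ρstar t.coact) ∧
        (∀ y ∈ cotensor K H ρstar t.coact,
          ∃! f : H ⊗[K] W →ₗ[K] V, f ∈ homHD K H R sHW t ∧ muW K H f = y)) ∧
    (∀ (V₁ V₂ : Type) [AddCommGroup V₁] [Module K V₁] [AddCommGroup V₂] [Module K V₂]
        (t₁ : RModStr K H R V₁) (t₂ : RModStr K H R V₂),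
        memDCat K H R D t₁ → memDCat K H R D t₂ →
        ∀ α ∈ homHD K H R t₁ t₂, ∀ f ∈ homHD K H R sHW t₁,
          muW K H (α ∘ₗ f) = (LinearMap.lTensor (Module.Dual K W) α) (muW K H f)) := by
  refine ⟨fun V _ _ t _ => ⟨fun f hf => ?_, fun y hy => ?_⟩,
    fun V₁ V₂ _ _ _ _ t₁ t₂ _ _ α _ f _ => LinearMap.lTensor_comp_apply _ _ _ _⟩
  · rw [mem_cotensor_iff K H hρstar, dualTensorHom_muW]
    exact lTensor_comp_mk_one_comp_coact K H sW t (hHWcoact ▸ hf.2)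
  · rw [mem_cotensor_iff K H hρstar] at hy
    refine ⟨inducedHom K H t (dualTensorHom K W V y),
      ⟨⟨inducedHom_act_comp K H hHWact t _,
          hHWcoact ▸ lTensor_inducedHom_comp_rhoHW K H sW t hy⟩,
        dualTensorHom_injective K ?_⟩, ?_⟩
    · rw [dualTensorHom_muW, inducedHom_comp_mk_one]
    · rintro f ⟨hf, rfl⟩
      rw [dualTensorHom_muW]
      exact eq_inducedHom_of_act_comp K H hHWact t hf.1
end
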